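/- arXiv:2205.08453 — 7 statements merged into one kernel-verified Lean document; each statement's English description precedes it below -/
import Mathlib

section
/- Let p : E → B and p' : E' → B' be Hurewicz fibrations and suppose there are continuous maps F : E → E', G : E' → E, f : B → B', g : B' → B with p' ∘ F = f ∘ p, p ∘ G = g ∘ p', and such that g ∘ f is homotopic to the identity of B. Then secat(p) ≤ secat(p'). -/
open Set unitInterval

universe u v

/-- `HasSecatLE p k`: the base admits an open cover by `k+1` sets,
each admitting a continuous local section of `p`. -/
def HasSecatLE {E : Type u} {B : Type v} [TopologicalSpace E] [TopologicalSpace B]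
    (p : E → B) (k : ℕ) : Prop :=
  ∃ U : Fin (k + 1) → Set B, (∀ i, IsOpen (U i)) ∧ (⋃ i, U i) = Set.univ ∧
    ∀ i, ∃ s : C(U i, E), ∀ x : U i, p (s x) = (x : B)

/-- The sectional category (Schwarz genus) of a map, valued in `ℕ∞`. -/
noncomputable def secat {E : Type u} {B : Type v} [TopologicalSpace E] [TopologicalSpace B]
    (p : E → B) : ℕ∞ :=
  ⨅ k ∈ {k : ℕ | HasSecatLE p k}, (k : ℕ∞)

/-- A Hurewicz fibration: a continuous map with the homotopy lifting property
with respect to all spaces. -/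
def IsHurewiczFibration {E : Type u} {B : Type v} [TopologicalSpace E] [TopologicalSpace B]
    (p : E → B) : Prop :=
  Continuous p ∧
    ∀ (Z : Type (max u v)) [TopologicalSpace Z] (H : C(Z × unitInterval, B)) (h : C(Z, E)),
      (∀ z, p (h z) = H (z, 0)) →
        ∃ H' : C(Z × unitInterval, E), (∀ z, H' (z, 0) = h z) ∧ ∀ q, p (H' q) = H q

/-- The standard time schedule `t_i = i/(r-1)`, `i = 0, …, r-1` in `[0,1]`. -/
noncomputable def schedule (r : ℕ) (i : Fin r) : unitInterval :=
  Set.projIcc 0 1 zero_le_one ((i : ℝ) / ((r : ℝ) - 1))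

/-- The space `E^I_B` of paths in `E` along which `p` is constant. -/
def FibConstPath {E : Type u} {B : Type v} [TopologicalSpace E] [TopologicalSpace B]
    (p : E → B) : Set C(unitInterval, E) :=
  {α | ∀ s t, p (α s) = p (α t)}

/-- The space `E^r_B` of `r`-tuples in `E` lying in a common fibre of `p`. -/
def ParamSpace {E : Type u} {B : Type v} [TopologicalSpace E] [TopologicalSpace B]
    (p : E → B) (r : ℕ) : Set (Fin r → E) :=
  {e | ∀ i j, p (e i) = p (e j)}

/-- The evaluation fibration `Π_r : E^I_B → E^r_B`. -/
noncomputable def paramEval {E : Type u} {B : Type v} [TopologicalSpace E] [TopologicalSpace B]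
    (p : E → B) (r : ℕ) (α : FibConstPath p) : ParamSpace p r :=
  ⟨fun i => α.1 (schedule r i), fun _ _ => α.2 _ _⟩

/-- The `r`-th sequential parametrized topological complexity `TC_r[p : E → B]`. -/
noncomputable def seqParamTC {E : Type u} {B : Type v} [TopologicalSpace E] [TopologicalSpace B]
    (p : E → B) (r : ℕ) : ℕ∞ :=
  secat (paramEval p r)

/-- The `r`-th sequential topological complexity `TC_r(X)` of a space. -/
noncomputable def seqTC (X : Type u) [TopologicalSpace X] (r : ℕ) : ℕ∞ :=
  secat (fun (α : C(unitInterval, X)) (i : Fin r) => α (schedule r i))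

/-- `HasCatLE Y k`: `Y` admits an open cover by `k+1` sets each contractible in `Y`. -/
def HasCatLE (Y : Type u) [TopologicalSpace Y] (k : ℕ) : Prop :=
  ∃ U : Fin (k + 1) → Set Y, (∀ i, IsOpen (U i)) ∧ (⋃ i, U i) = Set.univ ∧
    ∀ i, ∃ (H : C((U i) × unitInterval, Y)) (y : Y),
      (∀ x, H (x, 0) = (x.1 : Y)) ∧ (∀ x, H (x, 1) = y)

/-- The Lusternik–Schnirelmann category of a space, valued in `ℕ∞`. -/
noncomputable def LScat (Y : Type u) [TopologicalSpace Y] : ℕ∞ :=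
  ⨅ k ∈ {k : ℕ | HasCatLE Y k}, (k : ℕ∞)

/-- Given fibrations `p : E → B`, `p' : E' → B'` and maps `F, G, f, g` with
`p' ∘ F = f ∘ p`, `p ∘ G = g ∘ p'` and `g ∘ f` homotopic to the identity of `B`,
one has `secat p ≤ secat p'`. -/
theorem stmt2 {E E' B B' : Type u} [TopologicalSpace E] [TopologicalSpace E']
    [TopologicalSpace B] [TopologicalSpace B']
    (p : E → B) (p' : E' → B')
    (hp : IsHurewiczFibration p) (hp' : IsHurewiczFibration p')
    (F : C(E, E')) (G : C(E', E)) (f : C(B, B')) (g : C(B', B))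
    (hF : ∀ e, p' (F e) = f (p e)) (hG : ∀ e', p (G e') = g (p' e'))
    (hgf : (g.comp f).Homotopic (ContinuousMap.id B)) :
    secat p ≤ secat p' := by
  refine biInf_mono fun k hk => ?_
  obtain ⟨U', hopen, hcov, hsec⟩ := hk
  obtain ⟨K⟩ := hgf
  refine ⟨fun i => f ⁻¹' (U' i), fun i => (hopen i).preimage f.continuous, ?_, fun i => ?_⟩
  · rw [← Set.preimage_iUnion, hcov, Set.preimage_univ]
  · obtain ⟨s', hs'⟩ := hsec i
    set res : C(↥(f ⁻¹' U' i), ↥(U' i)) :=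
      ⟨fun x => ⟨f x, x.2⟩, Continuous.subtype_mk (f.continuous.comp continuous_subtype_val) _⟩
    set h : C(↥(f ⁻¹' U' i), E) := G.comp (s'.comp res)
    set H : C(↥(f ⁻¹' U' i) × unitInterval, B) :=
      ⟨fun q => K (q.2, (q.1 : B)),
        K.continuous.comp
          (continuous_snd.prodMk (continuous_subtype_val.comp continuous_fst))⟩
    have hinit : ∀ z, p (h z) = H (z, 0) := by
      intro z
      show p (G (s' (res z))) = K (0, (z : B))
      rw [hG, hs', K.apply_zero]
      rfl
    obtain ⟨H', hH'0, hH'p⟩ := hp.2 ↥(f ⁻¹' U' i) H h hinit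
    refine ⟨H'.comp ⟨fun x => (x, 1), by continuity⟩, fun x => ?_⟩
    show p (H' (x, 1)) = (x : B)
    rw [hH'p]
    exact K.apply_one (x : B)
end

section
/- Let p : E → B and p' : E' → B be Hurewicz fibrations and let f : E → E' and g : E' → E be continuous maps with p' ∘ f = p and p ∘ g = p'. If g ∘ f is fibrewise homotopic to the identity of E, then TC_r[p : E → B] ≤ TC_r[p' : E' → B] for every r ≥ 2. -/
open Set unitInterval

universe u v

section Glue

variable {E E' X : Type u} [TopologicalSpace E] [TopologicalSpace E'] [TopologicalSpace X]

/-- The glued path construction. -/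
noncomputable def glueFun (g : C(E', E)) (H : C(E × unitInterval, E)) (r : ℕ) (hr : 2 ≤ r)
    (ev : X → Fin r → E) (α' : X → C(unitInterval, E')) (q : X × unitInterval) : E :=
  if |((r : ℝ) - 1) * (q.2 : ℝ) - (round (((r : ℝ) - 1) * (q.2 : ℝ)) : ℝ)| ≤ 1/3 then
    H (ev q.1 ⟨min (round (((r : ℝ) - 1) * (q.2 : ℝ))).toNat (r - 1), by omega⟩,
       Set.projIcc 0 1 zero_le_one
         (1 - 3 * |((r : ℝ) - 1) * (q.2 : ℝ) - (round (((r : ℝ) - 1) * (q.2 : ℝ)) : ℝ)|))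
  else
    g (α' q.1 (Set.projIcc 0 1 zero_le_one
        ((3 * (((r : ℝ) - 1) * (q.2 : ℝ)) - 2 * ((⌊((r : ℝ) - 1) * (q.2 : ℝ)⌋ : ℤ) : ℝ) - 1)
          / ((r : ℝ) - 1))))

lemma round_eq_of_bounds {c : ℝ} {j : ℤ} (h1 : (j : ℝ) ≤ c + 1/2) (h2 : c + 1/2 < (j : ℝ) + 1) :
    round c = j := by
  rw [round_eq]; exact Int.floor_eq_iff.2 ⟨h1, by push_cast; linarith⟩

lemma sched_coe {r : ℕ} (hr : 2 ≤ r) (jf : Fin r) :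
    ((schedule r jf : unitInterval) : ℝ) = (jf : ℝ) / ((r : ℝ) - 1) := by
  have h1 : (1 : ℝ) ≤ (r : ℝ) - 1 := by
    have : (2:ℝ) ≤ (r:ℝ) := by exact_mod_cast hr
    linarith
  have hj : (jf : ℝ) ≤ (r : ℝ) - 1 := by
    have := jf.isLt
    have : ((jf : ℕ) : ℝ) + 1 ≤ (r : ℝ) := by exact_mod_cast this
    linarith
  rw [schedule, projIcc_of_mem _ ⟨by positivity, by rw [div_le_one (by linarith)]; exact hj⟩]

lemma glueFun_node (g : C(E', E)) (H : C(E × unitInterval, E)) (r : ℕ) (hr : 2 ≤ r)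
    (ev : X → Fin r → E) (α' : X → C(unitInterval, E'))
    (H1 : ∀ e, H (e, 1) = e) (x : X) (jf : Fin r) :
    glueFun g H r hr ev α' (x, schedule r jf) = ev x jf := by
  have hRne : ((r : ℝ) - 1) ≠ 0 := by
    have : (2:ℝ) ≤ (r:ℝ) := by exact_mod_cast hr
    intro h; linarith [h]
  have hc : ((r : ℝ) - 1) * ((schedule r jf : unitInterval) : ℝ) = ((jf : ℕ) : ℝ) := by
    rw [sched_coe hr jf, mul_comm, div_mul_cancel₀ _ hRne]
  rw [glueFun]
  simp only [hc]
  have hr0 : round (((jf : ℕ) : ℝ)) = ((jf : ℕ) : ℤ) := round_natCast _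
  have hcond : |((jf : ℕ) : ℝ) - ((round (((jf : ℕ) : ℝ))) : ℝ)| ≤ 1/3 := by
    rw [hr0]; push_cast; norm_num
  rw [if_pos hcond]
  have h2 : (⟨min ((round (((jf : ℕ) : ℝ))).toNat) (r - 1), by omega⟩ : Fin r) = jf := by
    apply Fin.ext
    show min ((round (((jf : ℕ) : ℝ))).toNat) (r - 1) = (jf : ℕ)
    rw [hr0, Int.toNat_natCast]
    have := jf.isLt
    omega
  rw [h2]
  have habs : Set.projIcc (0:ℝ) 1 zero_le_one
      (1 - 3 * |((jf : ℕ) : ℝ) - ((round (((jf : ℕ) : ℝ))) : ℝ)|) = 1 := by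
    rw [hr0]
    push_cast
    norm_num
  rw [habs, H1]

lemma glueFun_branch1 (g : C(E', E)) (H : C(E × unitInterval, E)) (r : ℕ) (hr : 2 ≤ r)
    (ev : X → Fin r → E) (α' : X → C(unitInterval, E')) (q : X × unitInterval)
    {j : ℕ} (hj : j < r)
    (hlow : (j : ℝ) - 1/3 ≤ ((r : ℝ) - 1) * (q.2 : ℝ))
    (hhigh : ((r : ℝ) - 1) * (q.2 : ℝ) ≤ (j : ℝ) + 1/3) :
    glueFun g H r hr ev α' q =
      H (ev q.1 ⟨j, hj⟩,
        Set.projIcc 0 1 zero_le_one (1 - 3 * |((r : ℝ) - 1) * (q.2 : ℝ) - (j : ℝ)|)) := by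
  have hrd : round (((r : ℝ) - 1) * (q.2 : ℝ)) = (j : ℤ) :=
    round_eq_of_bounds (by push_cast; linarith) (by push_cast; linarith)
  have hcond : |((r : ℝ) - 1) * (q.2 : ℝ) - ((round (((r : ℝ) - 1) * (q.2 : ℝ))) : ℝ)| ≤ 1/3 := by
    rw [hrd]; rw [abs_le]; push_cast; constructor <;> linarith
  rw [glueFun, if_pos hcond]
  have h2 : (⟨min ((round (((r : ℝ) - 1) * (q.2 : ℝ))).toNat) (r - 1), by omega⟩ : Fin r)
      = ⟨j, hj⟩ := by
    apply Fin.ext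
    show min ((round (((r : ℝ) - 1) * (q.2 : ℝ))).toNat) (r - 1) = j
    rw [hrd, Int.toNat_natCast]
    omega
  rw [h2, hrd]
  push_cast
  rfl

lemma glueFun_endpoint (g : C(E', E)) (H : C(E × unitInterval, E)) (r : ℕ) (hr : 2 ≤ r)
    (ev : X → Fin r → E) (α' : X → C(unitInterval, E'))
    (hnode : ∀ x (jf : Fin r), g (α' x (schedule r jf)) = H (ev x jf, 0))
    (q : X × unitInterval) {j j' : ℕ} (hj' : j' < r)
    (hrd : round (((r : ℝ) - 1) * (q.2 : ℝ)) = (j' : ℤ))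
    (h13 : |((r : ℝ) - 1) * (q.2 : ℝ) - (j' : ℝ)| = 1/3)
    (harg : (3 * (((r : ℝ) - 1) * (q.2 : ℝ)) - 2 * (j : ℝ) - 1) / ((r : ℝ) - 1)
      = (j' : ℝ) / ((r : ℝ) - 1)) :
    glueFun g H r hr ev α' q =
      g (α' q.1 (Set.projIcc 0 1 zero_le_one
        ((3 * (((r : ℝ) - 1) * (q.2 : ℝ)) - 2 * (j : ℝ) - 1) / ((r : ℝ) - 1)))) := by
  have hcond : |((r : ℝ) - 1) * (q.2 : ℝ) - ((round (((r : ℝ) - 1) * (q.2 : ℝ))) : ℝ)| ≤ 1/3 := by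
    rw [hrd]; push_cast; push_cast at h13; rw [h13]
  rw [glueFun, if_pos hcond]
  have h2 : (⟨min ((round (((r : ℝ) - 1) * (q.2 : ℝ))).toNat) (r - 1), by omega⟩ : Fin r)
      = ⟨j', hj'⟩ := by
    apply Fin.ext
    show min ((round (((r : ℝ) - 1) * (q.2 : ℝ))).toNat) (r - 1) = j'
    rw [hrd, Int.toNat_natCast]
    omega
  rw [h2, hrd]
  have habs : |((r : ℝ) - 1) * (q.2 : ℝ) - (((j' : ℕ) : ℤ) : ℝ)| = 1/3 := by
    push_cast; push_cast at h13; exact h13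
  rw [habs]
  have hzero : Set.projIcc (0:ℝ) 1 zero_le_one (1 - 3 * (1/3 : ℝ)) = 0 := by
    norm_num
  rw [hzero, ← hnode q.1 ⟨j', hj'⟩]
  congr 1
  rw [harg, schedule]

lemma glueFun_branch2 (g : C(E', E)) (H : C(E × unitInterval, E)) (r : ℕ) (hr : 2 ≤ r)
    (ev : X → Fin r → E) (α' : X → C(unitInterval, E'))
    (hnode : ∀ x (jf : Fin r), g (α' x (schedule r jf)) = H (ev x jf, 0))
    (q : X × unitInterval)
    {j : ℕ} (hj : j + 1 < r)
    (hlow : (j : ℝ) + 1/3 ≤ ((r : ℝ) - 1) * (q.2 : ℝ))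
    (hhigh : ((r : ℝ) - 1) * (q.2 : ℝ) ≤ (j : ℝ) + 2/3) :
    glueFun g H r hr ev α' q =
      g (α' q.1 (Set.projIcc 0 1 zero_le_one
        ((3 * (((r : ℝ) - 1) * (q.2 : ℝ)) - 2 * (j : ℝ) - 1) / ((r : ℝ) - 1)))) := by
  by_cases hcond : |((r : ℝ) - 1) * (q.2 : ℝ) - ((round (((r : ℝ) - 1) * (q.2 : ℝ))) : ℝ)| ≤ 1/3
  · have hzl : ((round (((r : ℝ) - 1) * (q.2 : ℝ)) : ℤ) : ℝ) ≤ ((r : ℝ) - 1) * (q.2 : ℝ) + 1/2 := by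
      rw [round_eq]; exact Int.floor_le _
    have hzu : ((r : ℝ) - 1) * (q.2 : ℝ) + 1/2
        < ((round (((r : ℝ) - 1) * (q.2 : ℝ)) : ℤ) : ℝ) + 1 := by
      rw [round_eq]; exact Int.lt_floor_add_one _
    have hz : round (((r : ℝ) - 1) * (q.2 : ℝ)) = (j : ℤ)
        ∨ round (((r : ℝ) - 1) * (q.2 : ℝ)) = (j : ℤ) + 1 := by
      have h1 : (j : ℤ) - 1 < round (((r : ℝ) - 1) * (q.2 : ℝ)) := by
        have : ((j : ℤ) : ℝ) - 1 < ((round (((r : ℝ) - 1) * (q.2 : ℝ)) : ℤ) : ℝ) := by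
          push_cast; linarith
        exact_mod_cast this
      have h2 : round (((r : ℝ) - 1) * (q.2 : ℝ)) < (j : ℤ) + 2 := by
        have : ((round (((r : ℝ) - 1) * (q.2 : ℝ)) : ℤ) : ℝ) < ((j : ℤ) : ℝ) + 2 := by
          push_cast; linarith
        exact_mod_cast this
      omega
    rcases hz with hz | hz
    · have habs : |((r : ℝ) - 1) * (q.2 : ℝ) - (j : ℝ)| ≤ 1/3 := by
        have := hcond; rw [hz] at this; push_cast at this; exact_mod_cast this
      have hceq : ((r : ℝ) - 1) * (q.2 : ℝ) = (j : ℝ) + 1/3 := by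
        have := abs_le.1 habs; exact le_antisymm (by linarith [this.1, this.2]) (by linarith)
      refine glueFun_endpoint g H r hr ev α' hnode q (by omega) hz ?_ ?_
      · rw [hceq]; norm_num
      · rw [hceq]; ring_nf
    · have habs : |((r : ℝ) - 1) * (q.2 : ℝ) - ((j : ℝ) + 1)| ≤ 1/3 := by
        have := hcond; rw [hz] at this; push_cast at this
        convert this using 2
      have hceq : ((r : ℝ) - 1) * (q.2 : ℝ) = (j : ℝ) + 2/3 := by
        have := abs_le.1 habs; exact le_antisymm (by linarith [this.1, this.2]) (by linarith [this.1, this.2])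
      refine glueFun_endpoint g H r hr ev α' hnode q (j' := j + 1) (by omega)
        (by push_cast; exact_mod_cast hz) ?_ ?_
      · push_cast; rw [hceq]; rw [abs_of_nonpos (by linarith)]; ring
      · push_cast; rw [hceq]; ring_nf
  · have hfl : ⌊((r : ℝ) - 1) * (q.2 : ℝ)⌋ = (j : ℤ) :=
      Int.floor_eq_iff.2 ⟨by push_cast; linarith, by push_cast; linarith⟩
    rw [glueFun, if_neg hcond, hfl]
    push_cast
    rfl

lemma glueFun_continuous (g : C(E', E)) (H : C(E × unitInterval, E)) (r : ℕ) (hr : 2 ≤ r)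
    (ev : X → Fin r → E) (α' : X → C(unitInterval, E'))
    (hev : Continuous ev) (hα' : Continuous α')
    (hnode : ∀ x (jf : Fin r), g (α' x (schedule r jf)) = H (ev x jf, 0)) :
    Continuous (glueFun g H r hr ev α') := by
  have hcfc : Continuous (fun q : X × unitInterval => ((r : ℝ) - 1) * (q.2 : ℝ)) :=
    continuous_const.mul (continuous_subtype_val.comp continuous_snd)
  have hR1 : (1 : ℝ) ≤ (r : ℝ) - 1 := by
    have : (2:ℝ) ≤ (r:ℝ) := by exact_mod_cast hr
    linarith
  apply (locallyFinite_of_finite (fun k : Fin (3*(r-1)) =>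
      (fun q : X × unitInterval => ((r : ℝ) - 1) * (q.2 : ℝ)) ⁻¹'
        Icc (((k : ℕ) : ℝ)/3) ((((k : ℕ) : ℝ)+1)/3))).continuous
  · -- cover
    apply eq_univ_of_forall
    intro q
    rw [mem_iUnion]
    have ht0 : (0:ℝ) ≤ (q.2 : ℝ) := q.2.2.1
    have ht1 : (q.2 : ℝ) ≤ 1 := q.2.2.2
    set c : ℝ := ((r : ℝ) - 1) * (q.2 : ℝ) with hc
    have h0 : 0 ≤ c := mul_nonneg (by linarith) ht0
    have h1 : c ≤ (r : ℝ) - 1 := by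
      calc c ≤ ((r : ℝ) - 1) * 1 := by
              apply mul_le_mul_of_nonneg_left ht1 (by linarith)
        _ = (r : ℝ) - 1 := mul_one _
    have hcast : ((3*(r-1) : ℕ) : ℝ) = 3 * ((r:ℝ) - 1) := by
      push_cast [Nat.cast_sub (by omega : 1 ≤ r)]; ring
    have hfl0 : (0:ℤ) ≤ ⌊3 * c⌋ := Int.floor_nonneg.2 (by linarith)
    by_cases hle : (⌊3 * c⌋).toNat ≤ 3*(r-1) - 1
    · refine ⟨⟨(⌊3 * c⌋).toNat, by omega⟩, ?_⟩
      have hval : (((⌊3 * c⌋).toNat : ℕ) : ℝ) = ((⌊3 * c⌋ : ℤ) : ℝ) := by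
        exact_mod_cast Int.toNat_of_nonneg hfl0
      constructor
      · show (((⌊3 * c⌋).toNat : ℕ) : ℝ)/3 ≤ c
        rw [hval]
        have := Int.floor_le (3 * c)
        linarith
      · show c ≤ ((((⌊3 * c⌋).toNat : ℕ) : ℝ)+1)/3
        rw [hval]
        have := Int.lt_floor_add_one (3 * c)
        linarith
    · refine ⟨⟨3*(r-1) - 1, by omega⟩, ?_⟩
      have hbig : ((3*(r-1) : ℕ) : ℝ) ≤ ((⌊3 * c⌋ : ℤ) : ℝ) := by
        have h' : (3*(r-1) : ℕ) ≤ (⌊3 * c⌋).toNat := by omega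
        have : ((3*(r-1) : ℕ) : ℤ) ≤ ⌊3 * c⌋ := by omega
        exact_mod_cast this
      have hcast1 : ((3*(r-1) - 1 : ℕ) : ℝ) = 3 * ((r:ℝ) - 1) - 1 := by
        push_cast [Nat.cast_sub (by omega : 1 ≤ 3*(r-1)), Nat.cast_sub (by omega : 1 ≤ r)]; ring
      constructor
      · show (((3*(r-1) - 1 : ℕ)) : ℝ)/3 ≤ c
        rw [hcast1]
        have := Int.floor_le (3 * c)
        rw [hcast] at hbig
        linarith
      · show c ≤ ((((3*(r-1) - 1 : ℕ)) : ℝ)+1)/3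
        rw [hcast1]
        linarith
  · intro k
    exact isClosed_Icc.preimage hcfc
  · intro k
    have hklt : (k : ℕ) < 3*(r-1) := k.isLt
    set j : ℕ := (k : ℕ)/3 with hj
    have hjlt : j + 1 < r := by omega
    have hk3 : (k:ℕ) = 3*j ∨ (k:ℕ) = 3*j+1 ∨ (k:ℕ) = 3*j+2 := by omega
    rcases hk3 with hk | hk | hk
    · -- first-third piece: H-branch at node j
      apply ContinuousOn.congr
        (f := fun q : X × unitInterval => H (ev q.1 ⟨j, by omega⟩,
          Set.projIcc 0 1 zero_le_one (1 - 3 * |((r : ℝ) - 1) * (q.2 : ℝ) - (j : ℝ)|)))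
      · apply Continuous.continuousOn
        apply H.continuous.comp
        apply Continuous.prodMk
        · exact (continuous_apply _).comp (hev.comp continuous_fst)
        · exact continuous_projIcc.comp
            (continuous_const.sub (continuous_const.mul (hcfc.sub continuous_const).abs))
      · intro q hq
        obtain ⟨hq1, hq2⟩ := hq
        have hkr : ((k : ℕ) : ℝ) = 3 * (j : ℝ) := by rw [hk]; push_cast; ring
        exact glueFun_branch1 g H r hr ev α' q (by omega)
          (by rw [hkr] at hq1; linarith) (by rw [hkr] at hq2; linarith)
    · -- middle-third piece: travel branch
      apply ContinuousOn.congr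
        (f := fun q : X × unitInterval => g (α' q.1 (Set.projIcc 0 1 zero_le_one
          ((3 * (((r : ℝ) - 1) * (q.2 : ℝ)) - 2 * (j : ℝ) - 1) / ((r : ℝ) - 1)))))
      · apply Continuous.continuousOn
        have hinner : Continuous (fun q : X × unitInterval => Set.projIcc (0:ℝ) 1 zero_le_one
            ((3 * (((r : ℝ) - 1) * (q.2 : ℝ)) - 2 * (j : ℝ) - 1) / ((r : ℝ) - 1))) :=
          continuous_projIcc.comp
            (((continuous_const.mul hcfc).sub continuous_const).sub continuous_const |>.div_const _)
        exact g.continuous.comp (continuous_eval.comp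
          ((hα'.comp continuous_fst).prodMk hinner))
      · intro q hq
        obtain ⟨hq1, hq2⟩ := hq
        have hkr : ((k : ℕ) : ℝ) = 3 * (j : ℝ) + 1 := by rw [hk]; push_cast; ring
        exact glueFun_branch2 g H r hr ev α' hnode q hjlt
          (by rw [hkr] at hq1; linarith) (by rw [hkr] at hq2; linarith)
    · -- last-third piece: H-branch at node j+1
      apply ContinuousOn.congr
        (f := fun q : X × unitInterval => H (ev q.1 ⟨j+1, hjlt⟩,
          Set.projIcc 0 1 zero_le_one (1 - 3 * |((r : ℝ) - 1) * (q.2 : ℝ) - ((j+1 : ℕ) : ℝ)|)))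
      · apply Continuous.continuousOn
        apply H.continuous.comp
        apply Continuous.prodMk
        · exact (continuous_apply _).comp (hev.comp continuous_fst)
        · exact continuous_projIcc.comp
            (continuous_const.sub (continuous_const.mul (hcfc.sub continuous_const).abs))
      · intro q hq
        obtain ⟨hq1, hq2⟩ := hq
        have hkr : ((k : ℕ) : ℝ) = 3 * (j : ℝ) + 2 := by rw [hk]; push_cast; ring
        have h1 : ((j+1 : ℕ) : ℝ) - 1/3 ≤ ((r : ℝ) - 1) * (q.2 : ℝ) := by
          push_cast; rw [hkr] at hq1; linarith
        have h2 : ((r : ℝ) - 1) * (q.2 : ℝ) ≤ ((j+1 : ℕ) : ℝ) + 1/3 := by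
          push_cast; rw [hkr] at hq2; linarith
        exact glueFun_branch1 g H r hr ev α' q hjlt h1 h2


lemma glueFun_fib {B : Type v} (p : E → B) (g : C(E', E)) (H : C(E × unitInterval, E))
    (r : ℕ) (hr : 2 ≤ r)
    (ev : X → Fin r → E) (α' : X → C(unitInterval, E'))
    (Hfib : ∀ e t, p (H (e, t)) = p e)
    (hnode : ∀ x (jf : Fin r), g (α' x (schedule r jf)) = H (ev x jf, 0))
    (hfibg : ∀ x s t, p (g (α' x s)) = p (g (α' x t)))
    (hfib2 : ∀ x (jf : Fin r), p (ev x jf) = p (ev x ⟨0, by omega⟩)) :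
    ∀ q, p (glueFun g H r hr ev α' q) = p (ev q.1 ⟨0, by omega⟩) := by
  intro q
  rw [glueFun]
  split_ifs with h
  · exact (Hfib _ _).trans (hfib2 _ _)
  · calc p (g (α' q.1 _)) = p (g (α' q.1 (schedule r ⟨0, by omega⟩))) := hfibg _ _ _
      _ = p (H (ev q.1 ⟨0, by omega⟩, 0)) := by rw [hnode]
      _ = _ := Hfib _ _

end Glue

/-- If `p' ∘ f = p`, `p ∘ g = p'` and `g ∘ f` is fibrewise homotopic to `id_E`,
then `TC_r[p] ≤ TC_r[p']`. -/
theorem stmt6 {E E' B : Type u} [TopologicalSpace E] [TopologicalSpace E'] [TopologicalSpace B]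
    (p : E → B) (p' : E' → B)
    (hp : IsHurewiczFibration p) (hp' : IsHurewiczFibration p')
    (f : C(E, E')) (g : C(E', E))
    (hf : ∀ e, p' (f e) = p e) (hg : ∀ e', p (g e') = p' e')
    (H : C(E × unitInterval, E))
    (H0 : ∀ e, H (e, 0) = g (f e)) (H1 : ∀ e, H (e, 1) = e)
    (Hfib : ∀ e t, p (H (e, t)) = p e)
    (r : ℕ) (hr : 2 ≤ r) :
    seqParamTC p r ≤ seqParamTC p' r := by
  have key : ∀ k, HasSecatLE (paramEval p' r) k → HasSecatLE (paramEval p r) k := by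
    intro k hk
    obtain ⟨U, hUo, hUc, hUs⟩ := hk
    have hFmem : ∀ e : ParamSpace p r, (fun j => f (e.1 j)) ∈ ParamSpace p' r := by
      intro e i j
      show p' (f (e.1 i)) = p' (f (e.1 j))
      rw [hf, hf]; exact e.2 i j
    let F : ParamSpace p r → ParamSpace p' r := fun e => ⟨fun j => f (e.1 j), hFmem e⟩
    have hFc : Continuous F := Continuous.subtype_mk
      (continuous_pi fun j => f.continuous.comp ((continuous_apply j).comp continuous_subtype_val)) _
    refine ⟨fun i => F ⁻¹' (U i), fun i => (hUo i).preimage hFc, ?_, ?_⟩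
    · apply eq_univ_of_forall
      intro x
      have hx : F x ∈ ⋃ i, U i := hUc ▸ mem_univ _
      rw [mem_iUnion] at hx ⊢
      exact hx
    · intro i
      obtain ⟨s', hs'⟩ := hUs i
      let ev : ↥(F ⁻¹' (U i)) → Fin r → E := fun x => x.1.1
      have hev : Continuous ev := continuous_subtype_val.comp continuous_subtype_val
      let α' : ↥(F ⁻¹' (U i)) → C(unitInterval, E') := fun x => (s' ⟨F x.1, x.2⟩ : FibConstPath p').1
      have hα' : Continuous α' := continuous_subtype_val.comp
        (s'.continuous.comp (Continuous.subtype_mk (hFc.comp continuous_subtype_val) _))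
      have hα'eval : ∀ (x : ↥(F ⁻¹' (U i))) (jf : Fin r), α' x (schedule r jf) = f (x.1.1 jf) := by
        intro x jf
        have h := hs' ⟨F x.1, x.2⟩
        have h2 := congrArg Subtype.val h
        exact congrFun h2 jf
      have hnode : ∀ (x : ↥(F ⁻¹' (U i))) (jf : Fin r),
          g (α' x (schedule r jf)) = H (ev x jf, 0) := by
        intro x jf; rw [hα'eval, H0]
      have hfibg : ∀ (x : ↥(F ⁻¹' (U i))) s t, p (g (α' x s)) = p (g (α' x t)) := by
        intro x s t; rw [hg, hg]; exact (s' ⟨F x.1, x.2⟩).2 s t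
      have hfib2 : ∀ (x : ↥(F ⁻¹' (U i))) (jf : Fin r),
          p (ev x jf) = p (ev x ⟨0, by omega⟩) := fun x jf => x.1.2 jf _
      let β : C(↥(F ⁻¹' (U i)) × unitInterval, E) :=
        ⟨glueFun g H r hr ev α', glueFun_continuous g H r hr ev α' hev hα' hnode⟩
      have hfibaux := glueFun_fib p g H r hr ev α' Hfib hnode hfibg hfib2
      have hmem : ∀ x : ↥(F ⁻¹' (U i)), (β.curry x : C(unitInterval, E)) ∈ FibConstPath p := by
        intro x s t
        exact (hfibaux (x, s)).trans (hfibaux (x, t)).symm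
      refine ⟨⟨fun x => ⟨β.curry x, hmem x⟩, Continuous.subtype_mk β.curry.continuous _⟩, ?_⟩
      intro x
      apply Subtype.ext
      funext jf
      exact glueFun_node g H r hr ev α' H1 x jf
  exact iInf_le_iInf_of_subset key
end

section
/- If two Hurewicz fibrations p : E → B and p' : E' → B are fibrewise homotopy equivalent, then TC_r[p : E → B] = TC_r[p' : E' → B] for every r ≥ 2. -/
open Set unitInterval

universe u v

namespace Stmt7Aux

noncomputable def clampI (x : ℝ) : unitInterval := Set.projIcc 0 1 zero_le_one x

lemma continuous_clampI : Continuous clampI := by unfold clampI; exact continuous_projIcc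

lemma clampI_zero : clampI 0 = 0 := by
  simp [clampI, Set.projIcc]

lemma clampI_one : clampI 1 = 1 := by
  simp [clampI, Set.projIcc]

variable {E E' B : Type u} [TopologicalSpace E] [TopologicalSpace E'] [TopologicalSpace B]

noncomputable def pieceVal (g : C(E', E)) (H : C(E × unitInterval, E)) {r : ℕ}
    (e : Fin r → E) (α' : C(unitInterval, E')) (mF jF : Fin r) (u : ℝ) : E :=
  if u ≤ 1/3 then H (e mF, clampI (1 - 3*u))
  else if u ≤ 2/3 then g (α' (clampI (((mF : ℕ) + (3*u - 1))/((r:ℝ)-1))))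
  else H (e jF, clampI (3*u - 2))

noncomputable def bigPath (g : C(E', E)) (H : C(E × unitInterval, E)) {r : ℕ} (hr : 2 ≤ r)
    (e : Fin r → E) (α' : C(unitInterval, E')) (t : ℝ) : E :=
  pieceVal g H e α'
    ⟨min ⌊t * ((r:ℝ)-1)⌋₊ (r-2), by omega⟩
    ⟨min ⌊t * ((r:ℝ)-1)⌋₊ (r-2) + 1, by omega⟩
    (t * ((r:ℝ)-1) - (min ⌊t * ((r:ℝ)-1)⌋₊ (r-2) : ℕ))

lemma bigPath_eq (g : C(E', E)) (H : C(E × unitInterval, E)) {r : ℕ} (hr : 2 ≤ r)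
    (e : Fin r → E) (α' : C(unitInterval, E')) (m : ℕ) (hm : m ≤ r - 2) (t : ℝ)
    (h0 : (m : ℝ) ≤ t * ((r:ℝ)-1)) (h1 : t * ((r:ℝ)-1) ≤ (m : ℝ) + 1) :
    bigPath g H hr e α' t
      = pieceVal g H e α' ⟨m, by omega⟩ ⟨m+1, by omega⟩ (t * ((r:ℝ)-1) - (m : ℝ)) := by
  have hs0 : (0:ℝ) ≤ t * ((r:ℝ)-1) := le_trans (by positivity) h0
  rcases lt_or_eq_of_le h1 with hlt | heq
  · have hfloor : ⌊t * ((r:ℝ)-1)⌋₊ = m := by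
      rw [Nat.floor_eq_iff hs0]
      exact ⟨h0, by push_cast; linarith⟩
    have hmin : min ⌊t * ((r:ℝ)-1)⌋₊ (r-2) = m := by omega
    simp only [bigPath, hmin]
  · have hcast : t * ((r:ℝ)-1) = ((m + 1 : ℕ) : ℝ) := by push_cast; linarith
    have hfloor : ⌊t * ((r:ℝ)-1)⌋₊ = m + 1 := by rw [hcast, Nat.floor_natCast]
    rcases le_or_gt (m+1) (r-2) with hle | hgt
    · have hmin : min ⌊t * ((r:ℝ)-1)⌋₊ (r-2) = m + 1 := by omega
      simp only [bigPath, hmin]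
      have hu1 : t * ((r:ℝ)-1) - ((m+1 : ℕ) : ℝ) = 0 := by rw [hcast]; exact sub_self _
      have hu2 : t * ((r:ℝ)-1) - (m : ℝ) = 1 := by push_cast at hcast ⊢; linarith
      rw [hu1, hu2]
      simp only [pieceVal]
      norm_num
    · have hmeq : m = r - 2 := by omega
      have hmin : min ⌊t * ((r:ℝ)-1)⌋₊ (r-2) = m := by omega
      simp only [bigPath, hmin]

lemma schedule_coe {r : ℕ} (hr : 2 ≤ r) (i : Fin r) :
    ((schedule r i : unitInterval) : ℝ) = (i : ℕ) / ((r:ℝ) - 1) := by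
  have hr1 : (1:ℝ) ≤ (r:ℝ) - 1 := by
    have : (2:ℝ) ≤ (r:ℝ) := by exact_mod_cast hr
    linarith
  have hmem : ((i:ℕ):ℝ) / ((r:ℝ) - 1) ∈ Set.Icc (0:ℝ) 1 := by
    constructor
    · positivity
    · rw [div_le_one (by linarith)]
      have : ((i:ℕ):ℝ) ≤ (r:ℝ) - 1 := by
        have := i.2
        have : ((i:ℕ):ℝ) ≤ ((r-1 : ℕ):ℝ) := by exact_mod_cast Nat.le_sub_one_of_lt i.2
        push_cast [Nat.cast_sub (by omega : 1 ≤ r)] at this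
        linarith
      linarith
  rw [schedule, Set.projIcc_of_mem _ hmem]

lemma clampI_eq_schedule {r : ℕ} (hr : 2 ≤ r) (i : Fin r) :
    clampI (((i:ℕ):ℝ) / ((r:ℝ) - 1)) = schedule r i := rfl

lemma bigPath_eval (g : C(E', E)) (H : C(E × unitInterval, E)) {r : ℕ} (hr : 2 ≤ r)
    (e : Fin r → E) (α' : C(unitInterval, E')) (H1 : ∀ x, H (x, 1) = x) (i : Fin r) (t : ℝ)
    (ht : t * ((r:ℝ)-1) = ((i:ℕ):ℝ)) : bigPath g H hr e α' t = e i := by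
  rcases lt_or_ge (i : ℕ) (r - 1) with hi | hi
  · rw [bigPath_eq g H hr e α' (i:ℕ) (by omega) t (by rw [ht]) (by rw [ht]; linarith)]
    rw [ht, sub_self]
    rw [pieceVal, if_pos (by norm_num)]
    norm_num [clampI_one, H1]
  · have hieq : (i : ℕ) = r - 1 := by omega
    have hc1 : ((r - 1 : ℕ) : ℝ) = (r:ℝ) - 1 := by
      push_cast [Nat.cast_sub (by omega : 1 ≤ r)]; ring
    have hc2 : ((r - 2 : ℕ) : ℝ) = (r:ℝ) - 2 := by
      push_cast [Nat.cast_sub hr]; ring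
    have hrR : (2:ℝ) ≤ (r:ℝ) := by exact_mod_cast hr
    rw [bigPath_eq g H hr e α' (r - 2) (by omega) t
      (by rw [ht, hieq, hc1, hc2]; linarith)
      (by rw [ht, hieq, hc1, hc2]; linarith)]
    have hu : t * ((r:ℝ)-1) - ((r-2:ℕ):ℝ) = 1 := by
      rw [ht, hieq, hc1, hc2]; ring
    rw [hu, pieceVal, if_neg (by norm_num), if_neg (by norm_num)]
    have hidx : (⟨r - 2 + 1, by omega⟩ : Fin r) = i := by
      apply Fin.ext; simp [hieq]; omega
    rw [hidx]
    norm_num [clampI_one, H1]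

lemma bigPath_fiber (p : E → B) (p' : E' → B) (f : C(E, E')) (g : C(E', E))
    (H : C(E × unitInterval, E)) {r : ℕ} (hr : 2 ≤ r)
    (e : Fin r → E) (α' : C(unitInterval, E'))
    (hg : ∀ y, p (g y) = p' y) (hf : ∀ x, p' (f x) = p x)
    (Hfib : ∀ x s, p (H (x, s)) = p x)
    (hconst : ∀ a b, p' (α' a) = p' (α' b))
    (hzero : α' (schedule r ⟨0, by omega⟩) = f (e ⟨0, by omega⟩))
    (hE : ∀ i j, p (e i) = p (e j)) (t : ℝ) :
    p (bigPath g H hr e α' t) = p (e ⟨0, by omega⟩) := by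
  rw [bigPath, pieceVal]
  split_ifs with h1 h2
  · rw [Hfib]; exact hE _ _
  · rw [hg, hconst _ (schedule r ⟨0, by omega⟩), hzero, hf]
  · rw [Hfib]; exact hE _ _

lemma continuous_bigPath {X : Type u} [TopologicalSpace X]
    (f : C(E, E')) (g : C(E', E)) (H : C(E × unitInterval, E)) {r : ℕ} (hr : 2 ≤ r)
    (H0 : ∀ x, H (x, 0) = g (f x))
    (e : X → Fin r → E) (he : Continuous e)
    (α' : X → C(unitInterval, E')) (hα' : Continuous α')
    (hmatch : ∀ x (i : Fin r), (α' x) (schedule r i) = f (e x i))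
    (t : X → ℝ) (ht : Continuous t) (ht0 : ∀ x, 0 ≤ t x) (ht1 : ∀ x, t x ≤ 1) :
    Continuous fun x => bigPath g H hr (e x) (α' x) (t x) := by
  have hrR : (1:ℝ) ≤ (r:ℝ) - 1 := by
    have : (2:ℝ) ≤ (r:ℝ) := by exact_mod_cast hr
    linarith
  set s : X → ℝ := fun x => t x * ((r:ℝ) - 1) with hs_def
  have hs : Continuous s := ht.mul continuous_const
  have hs0 : ∀ x, 0 ≤ s x := fun x => by
    have := ht0 x; positivity
  have hs1 : ∀ x, s x ≤ (r:ℝ) - 1 := fun x => by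
    have := ht1 x
    calc t x * ((r:ℝ)-1) ≤ 1 * ((r:ℝ)-1) := by
          apply mul_le_mul_of_nonneg_right this; linarith
      _ = (r:ℝ) - 1 := one_mul _
  set A : Fin (r-1) → Set X := fun m => {x | ((m:ℕ):ℝ) ≤ s x ∧ s x ≤ ((m:ℕ):ℝ) + 1} with hA_def
  have hAclosed : ∀ m, IsClosed (A m) := by
    intro m
    have : A m = s ⁻¹' (Set.Icc ((m:ℕ):ℝ) (((m:ℕ):ℝ) + 1)) := rfl
    rw [this]
    exact isClosed_Icc.preimage hs
  have hAcover : ⋃ m, A m = Set.univ := by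
    ext x
    simp only [Set.mem_iUnion, Set.mem_univ, iff_true]
    by_cases hc : ⌊s x⌋₊ ≤ r - 2
    · refine ⟨⟨⌊s x⌋₊, by omega⟩, Nat.floor_le (hs0 x), ?_⟩
      exact (Nat.lt_floor_add_one (s x)).le
    · refine ⟨⟨r - 2, by omega⟩, ?_, ?_⟩
      · have h1 : (r - 1 : ℕ) ≤ ⌊s x⌋₊ := by omega
        have h2 : ((r-1:ℕ):ℝ) ≤ s x := le_trans (by exact_mod_cast Nat.cast_le.2 h1) (Nat.floor_le (hs0 x))
        have h30 : (r-2:ℕ) ≤ (r-1:ℕ) := by omega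
        have h3 : ((r-2:ℕ):ℝ) ≤ ((r-1:ℕ):ℝ) := Nat.cast_le.mpr h30
        linarith
      · have hc2 : ((r - 2 : ℕ) : ℝ) = (r:ℝ) - 2 := by
          push_cast [Nat.cast_sub hr]; ring
        rw [hc2]
        have := hs1 x
        linarith
  apply (locallyFinite_of_finite A).continuous hAcover hAclosed
  intro m
  have hm2 : (m : ℕ) ≤ r - 2 := by omega
  apply ContinuousOn.congr (f := fun x =>
      pieceVal g H (e x) (α' x) ⟨(m:ℕ), by omega⟩ ⟨(m:ℕ)+1, by omega⟩ (s x - ((m:ℕ):ℝ)))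
  · -- continuity of the fixed piece
    simp only [pieceVal]
    apply Continuous.continuousOn
    have hu : Continuous fun x => s x - ((m:ℕ):ℝ) := hs.sub continuous_const
    have heval : ∀ (τ : X → ℝ), Continuous τ →
        Continuous fun x => (α' x) (clampI (τ x)) := by
      intro τ hτ
      exact ContinuousEval.continuous_eval.comp (hα'.prodMk (continuous_clampI.comp hτ))
    have hB1 : Continuous fun x => H (e x ⟨(m:ℕ), by omega⟩, clampI (1 - 3*(s x - ((m:ℕ):ℝ)))) := by
      apply H.continuous.comp
      exact ((continuous_apply _).comp he).prodMk
        (continuous_clampI.comp (by fun_prop))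
    have hB3 : Continuous fun x => H (e x ⟨(m:ℕ)+1, by omega⟩, clampI (3*(s x - ((m:ℕ):ℝ)) - 2)) := by
      apply H.continuous.comp
      exact ((continuous_apply _).comp he).prodMk
        (continuous_clampI.comp (by fun_prop))
    have hB2 : Continuous fun x =>
        g ((α' x) (clampI (((((⟨(m:ℕ), by omega⟩ : Fin r) : ℕ):ℝ) + (3*(s x - ((m:ℕ):ℝ)) - 1))/((r:ℝ)-1)))) := by
      apply g.continuous.comp
      apply heval
      fun_prop
    apply Continuous.if_le
    · exact hB1
    · -- inner if
      apply Continuous.if_le hB2 hB3 hu continuous_const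
      -- boundary at u = 2/3
      intro x hx
      have harg : ((((⟨(m:ℕ), by omega⟩ : Fin r) : ℕ):ℝ) + (3*(s x - ((m:ℕ):ℝ)) - 1))/((r:ℝ)-1)
          = (((⟨(m:ℕ)+1, by omega⟩ : Fin r) : ℕ):ℝ)/((r:ℝ)-1) := by
        simp only [Fin.val_mk]
        rw [hx]; push_cast; ring_nf
      rw [harg, clampI_eq_schedule hr, hmatch]
      have harg2 : (3*(s x - ((m:ℕ):ℝ)) - 2) = 0 := by rw [hx]; ring
      rw [harg2, clampI_zero, H0]
    · exact hu
    · exact continuous_const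
    · -- boundary at u = 1/3
      intro x hx
      have h13 : s x - ((m:ℕ):ℝ) ≤ 2/3 := by rw [hx]; norm_num
      rw [if_pos h13]
      have harg : (1 - 3*(s x - ((m:ℕ):ℝ))) = 0 := by rw [hx]; ring
      rw [harg, clampI_zero, H0]
      have harg2 : ((((⟨(m:ℕ), by omega⟩ : Fin r) : ℕ):ℝ) + (3*(s x - ((m:ℕ):ℝ)) - 1))/((r:ℝ)-1)
          = (((⟨(m:ℕ), by omega⟩ : Fin r) : ℕ):ℝ)/((r:ℝ)-1) := by
        rw [hx]; ring_nf
      rw [harg2, clampI_eq_schedule hr, hmatch]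
  · intro x hx
    exact bigPath_eq g H hr (e x) (α' x) (m:ℕ) hm2 (t x) hx.1 hx.2

end Stmt7Aux

namespace Stmt7Aux

variable {E E' B : Type u} [TopologicalSpace E] [TopologicalSpace E'] [TopologicalSpace B]

lemma schedule_mul {r : ℕ} (hr : 2 ≤ r) (i : Fin r) :
    ((schedule r i : unitInterval) : ℝ) * ((r:ℝ) - 1) = ((i:ℕ):ℝ) := by
  have hr1 : (0:ℝ) < (r:ℝ) - 1 := by
    have : (2:ℝ) ≤ (r:ℝ) := by exact_mod_cast hr
    linarith
  rw [schedule_coe hr i, div_mul_cancel₀ _ (ne_of_gt hr1)]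

lemma transfer (p : E → B) (p' : E' → B)
    (f : C(E, E')) (g : C(E', E))
    (hf : ∀ e, p' (f e) = p e) (hg : ∀ e', p (g e') = p' e')
    (H : C(E × unitInterval, E))
    (H0 : ∀ e, H (e, 0) = g (f e)) (H1 : ∀ e, H (e, 1) = e)
    (Hfib : ∀ e t, p (H (e, t)) = p e)
    (r : ℕ) (hr : 2 ≤ r) (k : ℕ)
    (hk : HasSecatLE (paramEval p' r) k) : HasSecatLE (paramEval p r) k := by
  obtain ⟨U', hUo, hUc, hUs⟩ := hk
  have hF : ∀ x : ParamSpace p r, (fun i => f (x.1 i)) ∈ ParamSpace p' r := by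
    intro x i j
    rw [hf, hf]; exact x.2 i j
  let F : C(↥(ParamSpace p r), ↥(ParamSpace p' r)) :=
    ⟨fun x => ⟨fun i => f (x.1 i), hF x⟩,
      Continuous.subtype_mk
        (continuous_pi fun i => f.continuous.comp ((continuous_apply i).comp continuous_subtype_val)) _⟩
  refine ⟨fun i => F ⁻¹' (U' i), fun i => (hUo i).preimage F.continuous, ?_, ?_⟩
  · rw [← Set.preimage_iUnion, hUc, Set.preimage_univ]
  · intro i
    obtain ⟨s', hs'⟩ := hUs i
    -- the continuous map from the preimage set to U' i
    let yc : C(↥(F ⁻¹' (U' i)), ↥(U' i)) :=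
      ⟨fun x => ⟨F x.1, x.2⟩, (F.continuous.comp continuous_subtype_val).subtype_mk _⟩
    let αm : ↥(F ⁻¹' (U' i)) → C(unitInterval, E') := fun x => (s' (yc x)).1
    have hαm : Continuous αm := continuous_subtype_val.comp (s'.continuous.comp yc.continuous)
    have hmatch : ∀ (x : ↥(F ⁻¹' (U' i))) (j : Fin r), (αm x) (schedule r j) = f (x.1.1 j) := by
      intro x j
      have h := hs' (yc x)
      have h2 : (paramEval p' r (s' (yc x))).1 j = ((yc x : ↥(U' i)) : ↥(ParamSpace p' r)).1 j := by
        rw [h]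
      exact h2
    -- the big map
    have hcont : Continuous fun q : ↥(F ⁻¹' (U' i)) × unitInterval =>
        bigPath g H hr (q.1.1.1) (αm q.1) ((q.2 : ℝ)) := by
      apply continuous_bigPath f g H hr H0
      · exact continuous_subtype_val.comp (continuous_subtype_val.comp continuous_fst)
      · exact hαm.comp continuous_fst
      · intro q j; exact hmatch q.1 j
      · exact continuous_subtype_val.comp continuous_snd
      · exact fun q => q.2.2.1
      · exact fun q => q.2.2.2
    let Φ : C(↥(F ⁻¹' (U' i)) × unitInterval, E) := ⟨_, hcont⟩
    let Φc : C(↥(F ⁻¹' (U' i)), C(unitInterval, E)) := Φ.curry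
    have hmem : ∀ x : ↥(F ⁻¹' (U' i)), (Φc x : C(unitInterval, E)) ∈ FibConstPath p := by
      intro x a b
      have key : ∀ c : unitInterval, p ((Φc x) c) = p (x.1.1 ⟨0, by omega⟩) := by
        intro c
        show p (bigPath g H hr (x.1.1) (αm x) ((c : ℝ))) = _
        exact bigPath_fiber p p' f g H hr (x.1.1) (αm x) hg hf Hfib
          (fun a b => (s' (yc x)).2 a b) (hmatch x ⟨0, by omega⟩) x.1.2 (c : ℝ)
      rw [key a, key b]
    refine ⟨⟨fun x => ⟨Φc x, hmem x⟩, Continuous.subtype_mk Φc.continuous _⟩, ?_⟩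
    intro x
    apply Subtype.ext
    funext j
    show (Φc x) (schedule r j) = x.1.1 j
    show bigPath g H hr (x.1.1) (αm x) ((schedule r j : ℝ)) = x.1.1 j
    exact bigPath_eval g H hr (x.1.1) (αm x) H1 j _ (schedule_mul hr j)

end Stmt7Aux

/-- Fibrewise homotopy equivalent fibrations over the same base have equal
sequential parametrized topological complexities. -/
theorem stmt7 {E E' B : Type u} [TopologicalSpace E] [TopologicalSpace E'] [TopologicalSpace B]
    (p : E → B) (p' : E' → B)
    (hp : IsHurewiczFibration p) (hp' : IsHurewiczFibration p')
    (f : C(E, E')) (g : C(E', E))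
    (hf : ∀ e, p' (f e) = p e) (hg : ∀ e', p (g e') = p' e')
    (H : C(E × unitInterval, E))
    (H0 : ∀ e, H (e, 0) = g (f e)) (H1 : ∀ e, H (e, 1) = e)
    (Hfib : ∀ e t, p (H (e, t)) = p e)
    (H' : C(E' × unitInterval, E'))
    (H'0 : ∀ e', H' (e', 0) = f (g e')) (H'1 : ∀ e', H' (e', 1) = e')
    (H'fib : ∀ e' t, p' (H' (e', t)) = p' e')
    (r : ℕ) (hr : 2 ≤ r) :
    seqParamTC p r = seqParamTC p' r := by
  apply le_antisymm
  · refine le_iInf₂ fun k hk => iInf₂_le k ?_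
    exact Stmt7Aux.transfer p p' f g hf hg H H0 H1 Hfib r hr k hk
  · refine le_iInf₂ fun k hk => iInf₂_le k ?_
    exact Stmt7Aux.transfer p' p g f hg hf H' H'0 H'1 H'fib r hr k hk
end

section
/- Let p₁ : E₁ → B₁ and p₂ : E₂ → B₂ be Hurewicz fibrations with all four spaces metrisable. Then for every r ≥ 2, TC_r[p₁ × p₂ : E₁ × E₂ → B₁ × B₂] ≤ TC_r[p₁ : E₁ → B₁] + TC_r[p₂ : E₂ → B₂]. -/
/-!
Up to the identifications `(E₁ × E₂)^r_B ↪ (E₁)^r_{B₁} × (E₂)^r_{B₂}` and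
`(E₁)^I_{B₁} × (E₂)^I_{B₂} → (E₁ × E₂)^I_B`, the evaluation fibration of `p₁ × p₂` is the
product `Π_r(p₁) × Π_r(p₂)`, so it suffices that `secat (f × g) ≤ secat f + secat g` over a
paracompact normal base. Given open covers `Uᵢ` (`i ≤ n`) and `Vⱼ` (`j ≤ m`) carrying sections,
each `Uᵢ × Vⱼ` carries one. Choose partitions of unity `fᵢ`, `gⱼ` subordinate to them and let
`O i j` be the set where `fᵢ gⱼ` is positive and strictly exceeds every `fₐ g_b` with
`(a, b) ≰ (i, j)`. Two such sets with the same `i + j` are disjoint, so `W k = ⋃_{i+j=k} O i j`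
carries a section, and at any point the last maximisers `i` of `f` and `j` of `g` give
`(i, j)` with the point in `O i j`; hence `W 0, …, W (n + m)` cover the base.
-/

open Set unitInterval

universe u v

open Function Topology

section LocalSections

variable {E B : Type*} [TopologicalSpace E] [TopologicalSpace B]

def HasLocalSection (p : E → B) (U : Set B) : Prop :=
  ∃ s : C(U, E), ∀ x : U, p (s x) = x

theorem HasLocalSection.mono {p : E → B} {U V : Set B} (h : HasLocalSection p U) (hVU : V ⊆ U) :
    HasLocalSection p V := by
  obtain ⟨s, hs⟩ := h
  exact ⟨s.comp ⟨inclusion hVU, continuous_inclusion hVU⟩, fun x => hs _⟩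

theorem HasLocalSection.iUnion {ι : Type*} {p : E → B} {O : ι → Set B} (hO : ∀ c, IsOpen (O c))
    (hd : Pairwise (Disjoint on O)) (h : ∀ c, HasLocalSection p (O c)) :
    HasLocalSection p (⋃ c, O c) := by
  choose s hs using h
  let S : ι → Set (⋃ c, O c) := fun c => (↑) ⁻¹' O c
  let φ : ∀ c, C(S c, E) := fun c => (s c).comp ⟨fun x => ⟨x.1, x.2⟩, by fun_prop⟩
  have hφ : ∀ c c' (x : ⋃ c, O c) (hx : x ∈ S c) (hx' : x ∈ S c'),
      φ c ⟨x, hx⟩ = φ c' ⟨x, hx'⟩ := by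
    intro c c' x hx hx'
    obtain rfl : c = c' := hd.eq (not_disjoint_iff.2 ⟨x, hx, hx'⟩)
    rfl
  have hS : ∀ x, ∃ c, S c ∈ 𝓝 x := fun x =>
    (mem_iUnion.1 x.2).imp fun c hc => ((hO c).preimage continuous_subtype_val).mem_nhds hc
  refine ⟨ContinuousMap.liftCover S φ hφ hS, fun x => ?_⟩
  obtain ⟨c, hc⟩ := mem_iUnion.1 x.2
  have hx : ContinuousMap.liftCover S φ hφ hS x = φ c ⟨x, hc⟩ :=
    ContinuousMap.liftCover_coe (⟨x, hc⟩ : S c)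
  rw [hx]
  exact hs c _

theorem HasLocalSection.prod {E' B' : Type*} [TopologicalSpace E'] [TopologicalSpace B']
    {p : E → B} {q : E' → B'} {U : Set B} {V : Set B'} (hU : HasLocalSection p U)
    (hV : HasLocalSection q V) : HasLocalSection (Prod.map p q) (U ×ˢ V) := by
  obtain ⟨s, hs⟩ := hU
  obtain ⟨t, ht⟩ := hV
  let fst : C(U ×ˢ V, U) := ⟨fun x => ⟨x.1.1, x.2.1⟩, by fun_prop⟩
  let snd : C(U ×ˢ V, V) := ⟨fun x => ⟨x.1.2, x.2.2⟩, by fun_prop⟩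
  exact ⟨(s.comp fst).prodMk (t.comp snd), fun x => Prod.ext (hs (fst x)) (ht (snd x))⟩

end LocalSections

theorem exists_forall_le_and_lt_of_lt {ι α : Type*} [Finite ι] [Nonempty ι] [LinearOrder ι]
    [LinearOrder α] (f : ι → α) : ∃ i, (∀ a, f a ≤ f i) ∧ ∀ a, i < a → f a < f i := by
  obtain ⟨i, hi⟩ := Finite.exists_max fun a => toLex (f a, a)
  refine ⟨i, fun a => ?_, fun a hia => ?_⟩
  · rcases Prod.Lex.toLex_le_toLex.1 (hi a) with h | h
    exacts [h.le, h.1.le]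
  · rcases Prod.Lex.toLex_le_toLex.1 (hi a) with h | h
    exacts [h, absurd h.2 (not_le.2 hia)]

section DominanceSet

variable {Z κ : Type*} [Preorder κ] (φ : κ → Z → ℝ)

def dominanceSet (k : κ) : Set Z :=
  {z | 0 < φ k z ∧ ∀ k', ¬ k' ≤ k → φ k' z < φ k z}

variable {φ}

theorem isOpen_dominanceSet [TopologicalSpace Z] [Finite κ] (hφ : ∀ k, Continuous (φ k)) (k : κ) :
    IsOpen (dominanceSet φ k) := by
  simp only [dominanceSet, ofPred_and, ofPred_forall]
  exact (isOpen_lt continuous_const (hφ k)).inter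
    (isOpen_iInter_of_finite fun k' => isOpen_iInter_of_finite fun _ => isOpen_lt (hφ k') (hφ k))

theorem disjoint_dominanceSet {k k' : κ} (h : ¬ k ≤ k') (h' : ¬ k' ≤ k) :
    Disjoint (dominanceSet φ k) (dominanceSet φ k') :=
  disjoint_left.2 fun _ hz hz' => (hz.2 k' h').asymm (hz'.2 k h)

theorem exists_mem_dominanceSet_mul {ι κ : Type*} [Finite ι] [Finite κ] [LinearOrder ι]
    [LinearOrder κ] {f : ι → Z → ℝ} {g : κ → Z → ℝ} {z : Z} (hf₀ : ∀ a, 0 ≤ f a z)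
    (hg₀ : ∀ b, 0 ≤ g b z) (hf : ∃ a, 0 < f a z) (hg : ∃ b, 0 < g b z) :
    ∃ k, z ∈ dominanceSet (fun k : ι × κ => f k.1 * g k.2) k := by
  obtain ⟨a₀, ha₀⟩ := hf
  obtain ⟨b₀, hb₀⟩ := hg
  have : Nonempty ι := ⟨a₀⟩
  have : Nonempty κ := ⟨b₀⟩
  obtain ⟨i, hi, hi'⟩ := exists_forall_le_and_lt_of_lt (f · z)
  obtain ⟨j, hj, hj'⟩ := exists_forall_le_and_lt_of_lt (g · z)
  have hfi : 0 < f i z := ha₀.trans_le (hi a₀)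
  have hgj : 0 < g j z := hb₀.trans_le (hj b₀)
  refine ⟨(i, j), mul_pos hfi hgj, fun ⟨a, b⟩ hab => ?_⟩
  simp only [Prod.mk_le_mk, not_and_or, not_le] at hab
  rcases hab with hia | hjb
  · calc f a z * g b z ≤ f a z * g j z := mul_le_mul_of_nonneg_left (hj b) (hf₀ a)
      _ < f i z * g j z := mul_lt_mul_of_pos_right (hi' a hia) hgj
  · calc f a z * g b z ≤ f i z * g b z := mul_le_mul_of_nonneg_right (hi a) (hg₀ b)
      _ < f i z * g j z := mul_lt_mul_of_pos_left (hj' b hjb) hfi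

end DominanceSet

theorem hasSecatLE_add_of_hasLocalSection_inter {E B : Type*} [TopologicalSpace E]
    [TopologicalSpace B] [NormalSpace B] [ParacompactSpace B] (p : E → B) {n m : ℕ}
    {A : Fin (n + 1) → Set B} {A' : Fin (m + 1) → Set B} (hA : ∀ i, IsOpen (A i))
    (hA' : ∀ j, IsOpen (A' j)) (hA_cover : ⋃ i, A i = univ) (hA'_cover : ⋃ j, A' j = univ)
    (hsec : ∀ i j, HasLocalSection p (A i ∩ A' j)) : HasSecatLE p (n + m) := by
  obtain ⟨f, hf⟩ := PartitionOfUnity.exists_isSubordinate isClosed_univ A hA hA_cover.ge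
  obtain ⟨g, hg⟩ := PartitionOfUnity.exists_isSubordinate isClosed_univ A' hA' hA'_cover.ge
  set φ : Fin (n + 1) × Fin (m + 1) → B → ℝ := fun k => f k.1 * g k.2
  have hφ : ∀ k, Continuous (φ k) := fun k => (f k.1).continuous.mul (g k.2).continuous
  have hφ_sub : ∀ k, dominanceSet φ k ⊆ A k.1 ∩ A' k.2 := fun k z hz =>
    ⟨hf k.1 (subset_tsupport _ (left_ne_zero_of_mul hz.1.ne')),
      hg k.2 (subset_tsupport _ (right_ne_zero_of_mul hz.1.ne'))⟩
  let level (l : Fin (n + m + 1)) := {k : Fin (n + 1) × Fin (m + 1) // k.1.val + k.2.val = l.val}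
  -- Indices of equal total degree are incomparable, so their dominance sets are disjoint.
  have hdisj : ∀ l, Pairwise (Disjoint on fun k : level l => dominanceSet φ k.1) := by
    have hincomp : ∀ l (k k' : level l), k.1 ≤ k'.1 → k = k' := fun l k k' ⟨h₁, h₂⟩ =>
      Subtype.ext (Prod.ext (Fin.ext (by have := k.2; have := k'.2; omega))
        (Fin.ext (by have := k.2; have := k'.2; omega)))
    exact fun l k k' hne => disjoint_dominanceSet (fun h => hne (hincomp l k k' h))
      (fun h => hne (hincomp l k' k h).symm)
  refine ⟨fun l => ⋃ k : level l, dominanceSet φ k.1,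
    fun l => isOpen_iUnion fun k => isOpen_dominanceSet hφ _, ?_,
    fun l => HasLocalSection.iUnion (fun k => isOpen_dominanceSet hφ _) (hdisj l)
      fun k => (hsec _ _).mono (hφ_sub k.1)⟩
  refine eq_univ_of_forall fun z => ?_
  obtain ⟨k, hk⟩ := exists_mem_dominanceSet_mul (fun a => f.nonneg a z) (fun b => g.nonneg b z)
    (f.exists_pos (mem_univ z)) (g.exists_pos (mem_univ z))
  exact mem_iUnion.2 ⟨⟨k.1 + k.2, by omega⟩, mem_iUnion.2 ⟨⟨k, rfl⟩, hk⟩⟩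

section Secat

variable {E B E' B' : Type*} [TopologicalSpace E] [TopologicalSpace B] [TopologicalSpace E']
  [TopologicalSpace B']

theorem secat_le_of_hasSecatLE {p : E → B} {k : ℕ} (h : HasSecatLE p k) : secat p ≤ k :=
  iInf₂_le k h

theorem HasSecatLE.prodMap [NormalSpace (B × B')] [ParacompactSpace (B × B')] {p : E → B}
    {q : E' → B'} {n m : ℕ} (hp : HasSecatLE p n) (hq : HasSecatLE q m) :
    HasSecatLE (Prod.map p q) (n + m) := by
  obtain ⟨U, hU, hU_cover, hU_sec⟩ := hp
  obtain ⟨V, hV, hV_cover, hV_sec⟩ := hq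
  refine hasSecatLE_add_of_hasLocalSection_inter _ (A := fun i => Prod.fst ⁻¹' U i)
    (A' := fun j => Prod.snd ⁻¹' V j) (fun i => (hU i).preimage continuous_fst)
    (fun j => (hV j).preimage continuous_snd) (by rw [← preimage_iUnion, hU_cover, preimage_univ])
    (by rw [← preimage_iUnion, hV_cover, preimage_univ]) fun i j => ?_
  rw [← prod_eq]
  exact HasLocalSection.prod (hU_sec i) (hV_sec j)

theorem secat_prodMap_le [NormalSpace (B × B')] [ParacompactSpace (B × B')] (p : E → B)
    (q : E' → B') : secat (Prod.map p q) ≤ secat p + secat q :=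
  ENat.le_iInf₂_add_iInf₂ fun n hn m hm => by
    exact_mod_cast secat_le_of_hasSecatLE (HasSecatLE.prodMap hn hm)

theorem HasSecatLE.of_injective {p : E → B} {p' : E' → B'} {k : ℕ} (h : HasSecatLE p k)
    (π : C(B', B)) (hπ : Injective π) (μ : C(E, E')) (hμ : ∀ e, π (p' (μ e)) = p e) :
    HasSecatLE p' k := by
  obtain ⟨U, hU, hU_cover, hU_sec⟩ := h
  refine ⟨fun i => π ⁻¹' U i, fun i => (hU i).preimage π.continuous,
    by rw [← preimage_iUnion, hU_cover, preimage_univ], fun i => ?_⟩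
  obtain ⟨s, hs⟩ := hU_sec i
  let πU : C(π ⁻¹' U i, U i) := ⟨fun x => ⟨π x, x.2⟩, by fun_prop⟩
  exact ⟨μ.comp (s.comp πU), fun x => hπ ((hμ _).trans (hs (πU x)))⟩

theorem secat_le_of_injective {p : E → B} {p' : E' → B'} (π : C(B', B)) (hπ : Injective π)
    (μ : C(E, E')) (hμ : ∀ e, π (p' (μ e)) = p e) : secat p' ≤ secat p :=
  le_iInf₂ fun _ hk => secat_le_of_hasSecatLE (hk.of_injective π hπ μ hμ)

end Secat

section ProductFibration

variable {E₁ B₁ E₂ B₂ : Type*} [TopologicalSpace E₁] [TopologicalSpace B₁] [TopologicalSpace E₂]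
  [TopologicalSpace B₂] (p₁ : E₁ → B₁) (p₂ : E₂ → B₂) (r : ℕ)

def ParamSpace.prodSplit :
    C(ParamSpace (fun x : E₁ × E₂ => (p₁ x.1, p₂ x.2)) r, ParamSpace p₁ r × ParamSpace p₂ r) where
  toFun e := (⟨fun i => (e.1 i).1, fun i j => congrArg Prod.fst (e.2 i j)⟩,
    ⟨fun i => (e.1 i).2, fun i j => congrArg Prod.snd (e.2 i j)⟩)
  continuous_toFun := (Continuous.subtype_mk (continuous_pi fun i =>
    ((continuous_apply i).comp continuous_subtype_val).fst) _).prodMk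
    (Continuous.subtype_mk (continuous_pi fun i =>
      ((continuous_apply i).comp continuous_subtype_val).snd) _)

theorem ParamSpace.prodSplit_injective : Injective (ParamSpace.prodSplit p₁ p₂ r) :=
  fun _ _ h => Subtype.ext <| funext fun i => Prod.ext
    (congrArg (fun e => e.1.1 i) h) (congrArg (fun e => e.2.1 i) h)

def FibConstPath.prodMk :
    C(FibConstPath p₁ × FibConstPath p₂, FibConstPath fun x : E₁ × E₂ => (p₁ x.1, p₂ x.2)) where
  toFun α := ⟨α.1.1.prodMk α.2.1, fun s t => Prod.ext (α.1.2 s t) (α.2.2 s t)⟩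
  continuous_toFun := by
    refine (ContinuousMap.continuous_of_continuous_uncurry _ ?_).subtype_mk _
    change Continuous fun q : (FibConstPath p₁ × FibConstPath p₂) × I => (q.1.1.1 q.2, q.1.2.1 q.2)
    fun_prop

theorem seqParamTC_prod_le_secat_prodMap :
    seqParamTC (fun x : E₁ × E₂ => (p₁ x.1, p₂ x.2)) r ≤
      secat (Prod.map (paramEval p₁ r) (paramEval p₂ r)) :=
  secat_le_of_injective (ParamSpace.prodSplit p₁ p₂ r) (ParamSpace.prodSplit_injective p₁ p₂ r)
    (FibConstPath.prodMk p₁ p₂) fun _ => rfl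

end ProductFibration

theorem stmt8_general {E₁ B₁ E₂ B₂ : Type u} [TopologicalSpace E₁] [TopologicalSpace B₁]
    [TopologicalSpace E₂] [TopologicalSpace B₂]
    [TopologicalSpace.MetrizableSpace E₁]
    [TopologicalSpace.MetrizableSpace E₂]
    (p₁ : E₁ → B₁) (p₂ : E₂ → B₂)
    (r : ℕ) :
    seqParamTC (fun x : E₁ × E₂ => (p₁ x.1, p₂ x.2)) r ≤
      seqParamTC p₁ r + seqParamTC p₂ r := by
  let := TopologicalSpace.metrizableSpaceMetric (ParamSpace p₁ r × ParamSpace p₂ r)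
  exact (seqParamTC_prod_le_secat_prodMap p₁ p₂ r).trans (secat_prodMap_le _ _)

/-- For fibrations of metrizable spaces, sequential parametrized TC is
subadditive with respect to products. -/
theorem stmt8 {E₁ B₁ E₂ B₂ : Type u} [TopologicalSpace E₁] [TopologicalSpace B₁]
    [TopologicalSpace E₂] [TopologicalSpace B₂]
    [TopologicalSpace.MetrizableSpace E₁] [TopologicalSpace.MetrizableSpace B₁]
    [TopologicalSpace.MetrizableSpace E₂] [TopologicalSpace.MetrizableSpace B₂]
    (p₁ : E₁ → B₁) (p₂ : E₂ → B₂)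
    (h₁ : IsHurewiczFibration p₁) (h₂ : IsHurewiczFibration p₂)
    (r : ℕ) (hr : 2 ≤ r) :
    seqParamTC (fun x : E₁ × E₂ => (p₁ x.1, p₂ x.2)) r ≤
      seqParamTC p₁ r + seqParamTC p₂ r :=
  stmt8_general p₁ p₂ r
end

section
/- For any Hurewicz fibration p : E → B and any r ≥ 2, the sequence of sequential parametrized topological complexities is monotone: TC_{r+1}[p : E → B] ≥ TC_r[p : E → B]. -/
/-!
A section of `Π_{r+1}` over an open set `U ⊆ E^{r+1}_B` pulls back along the map
`E^r_B → E^{r+1}_B` that repeats the last point, and reparametrizing the resulting paths by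
`t ↦ t · (r-1)/r` turns it into a section of `Π_r`: this reparametrization carries the `r`
times `i/(r-1)` onto the first `r` of the `r+1` times `i/r`. Hence every open cover witnessing
`TC_{r+1}` yields one of the same size witnessing `TC_r`.
-/

open Set unitInterval

universe u v

universe u' v'

section Secat

variable {E : Type u} {B : Type v} {E' : Type u'} {B' : Type v'}
  [TopologicalSpace E] [TopologicalSpace B] [TopologicalSpace E'] [TopologicalSpace B']

theorem HasSecatLE.of_comm_of_rightInverse {p : E → B} {p' : E' → B'} {k : ℕ}
    (h : HasSecatLE p k) (ψ : C(E, E')) (ρ : B → B') (j : C(B', B))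
    (hcomm : ∀ e, p' (ψ e) = ρ (p e)) (hj : Function.RightInverse j ρ) :
    HasSecatLE p' k := by
  obtain ⟨U, hUopen, hUcover, hUsec⟩ := h
  refine ⟨fun i => j ⁻¹' U i, fun i => (hUopen i).preimage j.continuous, ?_, fun i => ?_⟩
  · rw [← Set.preimage_iUnion, hUcover, Set.preimage_univ]
  · obtain ⟨s, hs⟩ := hUsec i
    refine ⟨ψ.comp (s.comp ⟨fun x => ⟨j x, x.2⟩, by fun_prop⟩), fun x => ?_⟩
    simp [hcomm, hs, hj x]

theorem secat_le_of_comm_of_rightInverse {p : E → B} {p' : E' → B'}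
    (ψ : C(E, E')) (ρ : B → B') (j : C(B', B))
    (hcomm : ∀ e, p' (ψ e) = ρ (p e)) (hj : Function.RightInverse j ρ) :
    secat p' ≤ secat p :=
  iInf_le_iInf_of_subset fun _ hk => hk.of_comm_of_rightInverse ψ ρ j hcomm hj

end Secat

theorem coe_schedule (r : ℕ) (i : Fin r) : (schedule r i : ℝ) = i / (r - 1) := by
  have hi : (i : ℝ) ≤ r - 1 := by
    have := i.2
    rw [le_sub_iff_add_le]
    exact_mod_cast this
  rw [schedule, Set.projIcc_of_mem]
  have hr : (0 : ℝ) ≤ r - 1 := (Nat.cast_nonneg _).trans hi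
  exact ⟨div_nonneg (Nat.cast_nonneg _) hr, div_le_one_of_le₀ hi hr⟩

noncomputable def scheduleShrink (m : ℕ) : C(I, I) :=
  ⟨(· * ⟨m / (m + 1), div_mem (by positivity) (by positivity) (by linarith)⟩),
    continuous_mul_const _⟩

theorem scheduleShrink_schedule (m : ℕ) (i : Fin (m + 1)) :
    scheduleShrink m (schedule (m + 1) i) = schedule (m + 2) i.castSucc := by
  apply Subtype.ext
  simp only [scheduleShrink, ContinuousMap.coe_mk, Set.Icc.coe_mul, coe_schedule,
    Fin.val_castSucc]
  push_cast
  rw [add_sub_cancel_right, show (m : ℝ) + 2 - 1 = m + 1 by ring]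
  obtain rfl | hm := eq_or_ne m 0
  · simp [Fin.fin_one_eq_zero i]
  · have hm : (m : ℝ) ≠ 0 := Nat.cast_ne_zero.mpr hm
    field_simp

section Param

variable {E : Type u} {B : Type v} [TopologicalSpace E] [TopologicalSpace B] {p : E → B}

def FibConstPath.reparam (φ : C(I, I)) : C(FibConstPath p, FibConstPath p) :=
  ⟨fun α => ⟨α.1.comp φ, fun _ _ => α.2 _ _⟩,
    ((ContinuousMap.continuous_precomp φ).comp continuous_subtype_val).subtype_mk _⟩

def ParamSpace.init {r : ℕ} (e : ParamSpace p (r + 1)) : ParamSpace p r :=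
  ⟨Fin.init e.1, fun _ _ => e.2 _ _⟩

def ParamSpace.extendLast (m : ℕ) : C(ParamSpace p (m + 1), ParamSpace p (m + 2)) :=
  ⟨fun e => ⟨fun i : Fin (m + 2) => e.1 (Fin.clamp i m), fun _ _ => e.2 _ _⟩,
    by
      refine Continuous.subtype_mk ?_ _
      exact continuous_pi fun i => (continuous_apply _).comp continuous_subtype_val⟩

theorem ParamSpace.init_extendLast (m : ℕ) :
    Function.RightInverse (ParamSpace.extendLast (p := p) m) ParamSpace.init := by
  intro e
  ext i
  have hclamp : Fin.clamp i m = i := Fin.ext (by simp [Fin.coe_clamp, Nat.le_of_lt_succ i.2])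
  simp [ParamSpace.init, ParamSpace.extendLast, Fin.init, hclamp]

theorem paramEval_reparam_scheduleShrink (m : ℕ) (α : FibConstPath p) :
    paramEval p (m + 1) (FibConstPath.reparam (scheduleShrink m) α) =
      ParamSpace.init (paramEval p (m + 2) α) := by
  ext i
  simp [paramEval, FibConstPath.reparam, ParamSpace.init, Fin.init, scheduleShrink_schedule]

theorem seqParamTC_le_succ (p : E → B) (m : ℕ) :
    seqParamTC p (m + 1) ≤ seqParamTC p (m + 2) :=
  secat_le_of_comm_of_rightInverse (FibConstPath.reparam (scheduleShrink m)) ParamSpace.init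
    (ParamSpace.extendLast m) (paramEval_reparam_scheduleShrink m) (ParamSpace.init_extendLast m)

end Param

theorem stmt9_general {E B : Type u} [TopologicalSpace E] [TopologicalSpace B]
    (p : E → B) (r : ℕ) (hr : 2 ≤ r) :
    seqParamTC p r ≤ seqParamTC p (r + 1) := by
  obtain ⟨m, rfl⟩ : ∃ m, r = m + 1 := ⟨r - 1, by omega⟩
  exact seqParamTC_le_succ p m

/-- Monotonicity of sequential parametrized topological complexity in `r`. -/
theorem stmt9 {E B : Type u} [TopologicalSpace E] [TopologicalSpace B]
    (p : E → B) (hp : IsHurewiczFibration p) (r : ℕ) (hr : 2 ≤ r) :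
    seqParamTC p r ≤ seqParamTC p (r + 1) :=
  stmt9_general p r hr
end

section
/- Let p : E → B be a Hurewicz fibration, Δ : E → E^r_B the diagonal map e ↦ (e,…,e), and R a coefficient ring. If there exist cohomology classes u_1,…,u_k ∈ ker[Δ* : H*(E^r_B; R) → H*(E; R)] with u_1 ⌣ ⋯ ⌣ u_k ≠ 0 in H*(E^r_B; R), then TC_r[p : E → B] ≥ k. -/
open Set unitInterval

universe u v

/-- The inclusion of a subset as a continuous map. -/
def inclC {X : Type u} [TopologicalSpace X] (U : Set X) : C(↥U, X) :=
  ⟨Subtype.val, continuous_subtype_val⟩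

/-- A multiplicative cohomology theory with coefficients in `R` (modelling the singular
cohomology ring `H^*(-; R)`): a homotopy-invariant contravariant functor into rings, whose
products vanish when the factors vanish on open sets (the key property of singular
cohomology used in Schwarz's cup-length lower bound for the sectional category). -/
structure CohomologyTheory (R : Type v) [CommRing R] : Type (max (u + 1) v) where
  coh : (X : Type u) → [inst : TopologicalSpace X] → Type u
  ring : ∀ (X : Type u) [TopologicalSpace X], Ring (coh X)
  algebra : ∀ (X : Type u) [TopologicalSpace X], haveI := ring X; Algebra R (coh X)
  pull : ∀ {X Y : Type u} [TopologicalSpace X] [TopologicalSpace Y] (_ : C(X, Y)),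
    haveI := ring X; haveI := ring Y; coh Y →+* coh X
  pull_id : ∀ (X : Type u) [TopologicalSpace X] (a : coh X), pull (ContinuousMap.id X) a = a
  pull_comp : ∀ {X Y Z : Type u} [TopologicalSpace X] [TopologicalSpace Y] [TopologicalSpace Z]
    (f : C(X, Y)) (g : C(Y, Z)) (a : coh Z), pull f (pull g a) = pull (g.comp f) a
  homotopy_invariant : ∀ {X Y : Type u} [TopologicalSpace X] [TopologicalSpace Y]
    (f g : C(X, Y)), f.Homotopic g → ∀ a, pull f a = pull g a
  cup_vanish : ∀ {X : Type u} [TopologicalSpace X] (U V : Set X), IsOpen U → IsOpen V →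
    ∀ a b : coh X,
      (haveI := ring ↥U; pull (inclC U) a = 0) →
      (haveI := ring ↥V; pull (inclC V) b = 0) →
      (haveI := ring X; haveI := ring ↥(U ∪ V : Set X);
        pull (inclC (U ∪ V)) (a * b) = 0)

attribute [instance] CohomologyTheory.ring

/-- The diagonal map `Δ : E → E^r_B`. -/
def diagMap {E : Type u} {B : Type w} [TopologicalSpace E] [TopologicalSpace B]
    (p : E → B) (r : ℕ) : C(E, ↥(ParamSpace p r)) :=
  ⟨fun e => ⟨fun _ => e, fun _ _ => rfl⟩,
    Continuous.subtype_mk (continuous_pi fun _ => continuous_id) _⟩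



/-!
If an open set `U ⊆ E^r_B` carries a section `s` of `Π_r`, shrinking each path `s x` to its
starting point deforms the inclusion of `U` into `Δ ∘ (x ↦ s x 0)`, so every class of `ker Δ*`
restricts to zero on `U`. Schwarz's argument then applies: a product of `n + 1` classes, the
`i`-th vanishing on the `i`-th member of an open cover by `n + 1` sets, vanishes on the union,
which is everything.
-/

section Schwarz

variable {R : Type v} [CommRing R] (T : CohomologyTheory.{u} R) {X : Type u} [TopologicalSpace X]

theorem CohomologyTheory.pull_inclC_eq_zero_of_subset {A B : Set X} (h : A ⊆ B) {a : T.coh X}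
    (ha : T.pull (inclC B) a = 0) : T.pull (inclC A) a = 0 := by
  rw [show inclC A = (inclC B).comp ⟨Set.inclusion h, continuous_inclusion h⟩ from rfl,
    ← T.pull_comp, ha, map_zero]

theorem CohomologyTheory.eq_zero_of_pull_inclC_univ {a : T.coh X}
    (ha : T.pull (inclC (Set.univ : Set X)) a = 0) : a = 0 := by
  have hid : (inclC (Set.univ : Set X)).comp ⟨fun x => ⟨x, trivial⟩, by fun_prop⟩ =
      ContinuousMap.id X := rfl
  rw [← T.pull_id X a, ← hid, ← T.pull_comp, ha, map_zero]

theorem CohomologyTheory.pull_inclC_iUnion_prod_eq_zero {n : ℕ} (U : Fin (n + 1) → Set X)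
    (hU : ∀ i, IsOpen (U i)) (a : Fin (n + 1) → T.coh X)
    (ha : ∀ i, T.pull (inclC (U i)) (a i) = 0) :
    T.pull (inclC (⋃ i, U i)) (List.ofFn a).prod = 0 := by
  induction n with
  | zero =>
    simpa using T.pull_inclC_eq_zero_of_subset (Set.iUnion_subset fun i => by
      rw [Subsingleton.elim i 0]) (ha 0)
  | succ n ih =>
    rw [Set.iUnion_fin_add_one_eq_iUnion_succ, List.ofFn_succ, List.prod_cons]
    exact T.cup_vanish _ _ (hU 0) (isOpen_iUnion fun i => hU _) _ _ (ha 0)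
      (ih _ (fun i => hU _) _ fun i => ha _)

theorem CohomologyTheory.prod_eq_zero_of_iUnion_eq_univ {n : ℕ} (U : Fin (n + 1) → Set X)
    (hU : ∀ i, IsOpen (U i)) (hcov : ⋃ i, U i = Set.univ) (a : Fin (n + 1) → T.coh X)
    (ha : ∀ i, T.pull (inclC (U i)) (a i) = 0) : (List.ofFn a).prod = 0 :=
  T.eq_zero_of_pull_inclC_univ (hcov ▸ T.pull_inclC_iUnion_prod_eq_zero U hU a ha)

theorem CohomologyTheory.le_secat_of_prod_ne_zero {Y : Type u} [TopologicalSpace Y] (f : Y → X)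
    {k : ℕ} (u : Fin k → T.coh X)
    (hsec : ∀ U : Set X, IsOpen U → (∃ s : C(U, Y), ∀ x, f (s x) = x) →
      ∀ j, T.pull (inclC U) (u j) = 0)
    (hprod : (List.ofFn u).prod ≠ 0) : (k : ℕ∞) ≤ secat f := by
  refine le_iInf₂ fun n ⟨U, hU, hcov, hs⟩ => ?_
  by_contra! hlt
  obtain ⟨m, rfl⟩ := Nat.exists_eq_add_of_le (Nat.cast_lt.mp hlt)
  rw [List.ofFn_add, List.prod_append] at hprod
  exact hprod <| by
    rw [T.prod_eq_zero_of_iUnion_eq_univ U hU hcov _ fun i => hsec _ (hU i) (hs i) _, zero_mul]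

end Schwarz

section Parametrized

variable {E B : Type u} [TopologicalSpace E] [TopologicalSpace B] {p : E → B} {r : ℕ}

theorem inclC_homotopic_diagMap_comp_of_section {U : Set (ParamSpace p r)}
    (s : C(U, FibConstPath p)) (hs : ∀ x, paramEval p r (s x) = x) :
    (inclC U).Homotopic ((diagMap p r).comp ⟨fun x => (s x).1 0, by fun_prop⟩) := by
  refine ⟨⟨⟨fun q => ⟨fun m => (s q.2).1 (σ q.1 * schedule r m), fun _ _ => (s q.2).2 _ _⟩,
    by fun_prop⟩, fun x => ?_, fun x => ?_⟩⟩
  · conv_rhs => rw [inclC, ContinuousMap.coe_mk, ← hs x]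
    simp [paramEval]
  · ext m
    simp [diagMap]

theorem CohomologyTheory.pull_inclC_eq_zero_of_pull_diagMap_eq_zero {R : Type v} [CommRing R]
    (T : CohomologyTheory.{u} R) {U : Set (ParamSpace p r)}
    (hU : ∃ s : C(U, FibConstPath p), ∀ x, paramEval p r (s x) = x) {a : T.coh (ParamSpace p r)}
    (ha : T.pull (diagMap p r) a = 0) : T.pull (inclC U) a = 0 := by
  obtain ⟨s, hs⟩ := hU
  rw [T.homotopy_invariant _ _ (inclC_homotopic_diagMap_comp_of_section s hs), ← T.pull_comp, ha,
    map_zero]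

end Parametrized

theorem stmt11_general {R : Type v} [CommRing R] (T : CohomologyTheory.{u} R)
    {E B : Type u} [TopologicalSpace E] [TopologicalSpace B]
    (p : E → B) (r : ℕ) (k : ℕ)
    (u : Fin k → T.coh ↥(ParamSpace p r))
    (hker : ∀ i, T.pull (diagMap p r) (u i) = 0)
    (hprod : (List.ofFn u).prod ≠ 0) :
    (k : ℕ∞) ≤ seqParamTC p r :=
  T.le_secat_of_prod_ne_zero (paramEval p r) u
    (fun _ _ hU j => T.pull_inclC_eq_zero_of_pull_diagMap_eq_zero hU (hker j)) hprod

/-- If classes `u_1, …, u_k` in the kernel of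
`Δ^* : H^*(E^r_B; R) → H^*(E; R)` have nonzero cup product, then `TC_r[p] ≥ k`. -/
theorem stmt11 {R : Type v} [CommRing R] (T : CohomologyTheory.{u} R)
    {E B : Type u} [TopologicalSpace E] [TopologicalSpace B]
    (p : E → B) (hp : IsHurewiczFibration p) (r : ℕ) (hr : 2 ≤ r) (k : ℕ)
    (u : Fin k → T.coh ↥(ParamSpace p r))
    (hker : ∀ i, T.pull (diagMap p r) (u i) = 0)
    (hprod : (List.ofFn u).prod ≠ 0) :
    (k : ℕ∞) ≤ seqParamTC p r :=
  stmt11_general T p r k u hker hprod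
end

section
/- Let A be an associative ring containing elements ω_{ab} (for a < b in a totally ordered index set) of a common degree, satisfying ω_{ab}² = 0 and ω_{ap}ω_{bp} = ω_{ab}(ω_{bp} − ω_{ap}) for a < b < p. Then for any sequence j_1 < j_2 < ⋯ < j_p < j with p ≥ 2, setting J' = (j_2,…,j_p,j), one has ω_{j_1 j}·ω_{j_2 j}⋯ω_{j_p j} = Σ_I (−1)^{r(I)} ω_{i_1 j_2}·ω_{i_2 j_3}⋯ω_{i_{p−1} j_p}·ω_{i_p j}, where I = (i_1,…,i_p) runs over the 2^{p−1} J-modifications and r(I) is the number of repetitions in I. -/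
/-!
Multiply out from the left. The relation rewrites `ω_{i j_t} ω_{j_{k+1} j_t}` as
`ω_{i j_{k+1}} ω_{j_{k+1} j_t} - ω_{i j_{k+1}} ω_{i j_t}`, where `i < j_{k+1}` is the current
value of the modification: the first term takes the new value `j_{k+1}` and keeps the sign, the
second repeats `i` and flips it. After all `p - 1` steps every modification appears once, with
sign `(-1)` to the number of positions where no new value was taken, and since `J` is strictly
increasing these are exactly its repetitions.
-/

/-- The `J`-modification of the sequence `j` determined by the set `S` of positions where the
new value `j s` is taken (at positions not in `S`, the previous value repeats):
`i_0 = j_0` and `i_s = j s` if `s ∈ S`, `i_s = i_{s-1}` otherwise. -/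
def modSeq {ι : Type*} (j : ℕ → ι) (S : Finset ℕ) : ℕ → ι
  | 0 => j 0
  | s + 1 => if s + 1 ∈ S then j (s + 1) else modSeq j S s

theorem List.prod_map_range_eq_mul_mul {M : Type*} [Monoid M] (f : ℕ → M) {n k : ℕ}
    (hk : k + 1 < n) :
    ((List.range n).map f).prod = ((List.range k).map f).prod * (f k * f (k + 1)) *
      ((List.range (n - (k + 2))).map fun s => f (k + 2 + s)).prod := by
  obtain ⟨m, rfl⟩ : ∃ m, n = k + 2 + m := ⟨n - (k + 2), by omega⟩
  rw [Nat.add_sub_cancel_left, List.range_add, List.range_add]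
  simp [List.prod_append, List.range_succ, Function.comp_def, mul_assoc, add_assoc]

theorem List.prod_map_range_eq_sub_of_adjacent {R : Type*} [Ring R] {f g h : ℕ → R} {n k : ℕ}
    (hk : k + 1 < n) (hg : ∀ s, s ≠ k → s ≠ k + 1 → g s = f s)
    (hh : ∀ s, s ≠ k → s ≠ k + 1 → h s = f s)
    (hpair : f k * f (k + 1) = g k * g (k + 1) - h k * h (k + 1)) :
    ((List.range n).map f).prod = ((List.range n).map g).prod - ((List.range n).map h).prod := by
  have prefix_eq : ∀ e : ℕ → R, (∀ s, s ≠ k → s ≠ k + 1 → e s = f s) →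
      (List.range k).map e = (List.range k).map f :=
    fun e he => List.map_congr_left fun s hs => by
      rw [List.mem_range] at hs
      exact he s (by omega) (by omega)
  have suffix_eq : ∀ e : ℕ → R, (∀ s, s ≠ k → s ≠ k + 1 → e s = f s) →
      ((List.range (n - (k + 2))).map fun s => e (k + 2 + s)) =
        (List.range (n - (k + 2))).map fun s => f (k + 2 + s) :=
    fun e he => List.map_congr_left fun s _ => he _ (by omega) (by omega)
  rw [List.prod_map_range_eq_mul_mul f hk, List.prod_map_range_eq_mul_mul g hk,
    List.prod_map_range_eq_mul_mul h hk, prefix_eq g hg, prefix_eq h hh, suffix_eq g hg,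
    suffix_eq h hh, hpair, mul_sub, sub_mul]

section modSeq

variable {ι : Type*} (j : ℕ → ι)

theorem exists_le_modSeq_eq (S : Finset ℕ) (s : ℕ) : ∃ u ≤ s, modSeq j S s = j u := by
  induction s with
  | zero => exact ⟨0, le_rfl, rfl⟩
  | succ s ih =>
    by_cases hs : s + 1 ∈ S
    · exact ⟨s + 1, le_rfl, by simp [modSeq, hs]⟩
    · obtain ⟨u, hu, hju⟩ := ih
      exact ⟨u, by omega, by simp [modSeq, hs, hju]⟩

theorem modSeq_insert_of_lt {S : Finset ℕ} {m s : ℕ} (hs : s < m) :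
    modSeq j (insert m S) s = modSeq j S s := by
  induction s with
  | zero => rfl
  | succ s ih => simp [modSeq, Finset.mem_insert, hs.ne, ih (by omega)]

theorem modSeq_insert_self (S : Finset ℕ) (k : ℕ) :
    modSeq j (insert (k + 1) S) (k + 1) = j (k + 1) := by
  simp [modSeq]

theorem modSeq_succ_of_notMem {S : Finset ℕ} {k : ℕ} (hk : k + 1 ∉ S) :
    modSeq j S (k + 1) = modSeq j S k := by
  simp [modSeq, hk]

theorem filter_modSeq_eq_sdiff [LinearOrder ι] {p : ℕ}
    (hmono : ∀ s t : ℕ, s < t → t < p → j s < j t) (S : Finset ℕ) :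
    (Finset.Ico 1 p).filter (fun s => modSeq j S s = modSeq j S (s - 1)) =
      Finset.Ico 1 p \ S := by
  ext s
  simp only [Finset.mem_filter, Finset.mem_sdiff, Finset.mem_Ico]
  refine and_congr_right fun hs => ?_
  obtain ⟨k, rfl⟩ : ∃ k, s = k + 1 := ⟨s - 1, by omega⟩
  by_cases hkS : k + 1 ∈ S
  · obtain ⟨u, hu, hju⟩ := exists_le_modSeq_eq j S k
    have hlt := hmono u (k + 1) (by omega) hs.2
    simp only [modSeq, hkS, Nat.add_sub_cancel, hju, not_true_eq_false, iff_false]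
    exact hlt.ne'
  · simp [modSeq_succ_of_notMem j hkS, hkS]

end modSeq

section Expansion

variable {ι : Type*} [LinearOrder ι] {A : Type*} [Ring A]

/-- Factor `s` of a term of the expansion once the relation has been applied up to position `k`. -/
def partialModFactor (ω : ι → ι → A) (j : ℕ → ι) (jt : ι) (k : ℕ) (S : Finset ℕ) (s : ℕ) :
    A :=
  ω (if s ≤ k then modSeq j S s else j s) (if s < k then j (s + 1) else jt)

variable (ω : ι → ι → A)
  (hrel : ∀ a b c : ι, a < b → b < c → ω a c * ω b c = ω a b * (ω b c - ω a c))
  {p : ℕ} {j : ℕ → ι} {jt : ι}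
  (hmono : ∀ s t : ℕ, s < t → t < p → j s < j t) (hjt : ∀ s : ℕ, s < p → j s < jt)
include hrel hmono hjt

theorem prod_partialModFactor_eq_sub {k : ℕ} (hk : k + 1 < p) {S : Finset ℕ}
    (hkS : k + 1 ∉ S) :
    ((List.range p).map (partialModFactor ω j jt k S)).prod =
      ((List.range p).map (partialModFactor ω j jt (k + 1) (insert (k + 1) S))).prod -
        ((List.range p).map (partialModFactor ω j jt (k + 1) S)).prod := by
  have outside : ∀ T : Finset ℕ, (∀ s ≤ k, modSeq j T s = modSeq j S s) →
      ∀ s, s ≠ k → s ≠ k + 1 →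
        partialModFactor ω j jt (k + 1) T s = partialModFactor ω j jt k S s := by
    intro T hT s h1 h2
    unfold partialModFactor
    rcases lt_or_gt_of_ne h1 with hs | hs
    · rw [if_pos (by omega), if_pos (by omega), if_pos hs.le, if_pos hs, hT s hs.le]
    · rw [if_neg (by omega), if_neg (by omega), if_neg (by omega), if_neg (by omega)]
  refine List.prod_map_range_eq_sub_of_adjacent hk
    (outside _ fun s hs => modSeq_insert_of_lt j (by omega)) (outside S fun _ _ => rfl) ?_
  obtain ⟨u, hu, hju⟩ := exists_le_modSeq_eq j S k
  simp only [partialModFactor, le_refl, lt_irrefl, if_true, if_false, if_pos (Nat.le_succ k),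
    if_neg (Nat.not_succ_le_self k), if_neg (show ¬ k + 1 < k by omega),
    if_pos (Nat.lt_succ_self k), modSeq_insert_of_lt j (Nat.lt_succ_self k),
    modSeq_insert_self, modSeq_succ_of_notMem j hkS, hju]
  rw [hrel _ _ _ (hmono u (k + 1) (by omega) (by omega)) (hjt (k + 1) (by omega)), mul_sub]

theorem prod_eq_sum_prod_partialModFactor (k : ℕ) (hk : k < p) :
    ((List.range p).map fun s => ω (j s) jt).prod =
      ∑ S ∈ (Finset.Ico 1 (k + 1)).powerset, (-1 : A) ^ (Finset.Ico 1 (k + 1) \ S).card *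
        ((List.range p).map (partialModFactor ω j jt k S)).prod := by
  induction k with
  | zero =>
    simp only [zero_add, Finset.Ico_self, Finset.powerset_empty, Finset.sum_singleton,
      Finset.empty_sdiff, Finset.card_empty, pow_zero, one_mul]
    refine congrArg List.prod (List.map_congr_left fun s _ => ?_)
    rcases s with _ | s <;> simp [partialModFactor, modSeq]
  | succ k ih =>
    have hnotMem : k + 1 ∉ Finset.Ico 1 (k + 1) := by simp
    rw [ih (by omega), Nat.Ico_succ_right_eq_insert_Ico (by omega : 1 ≤ k + 1),
      Finset.sum_powerset_insert hnotMem, ← Finset.sum_add_distrib]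
    refine Finset.sum_congr rfl fun S hS => ?_
    have hkS : k + 1 ∉ S := fun h => hnotMem (Finset.mem_powerset.mp hS h)
    rw [prod_partialModFactor_eq_sub ω hrel hmono hjt hk hkS, Finset.insert_sdiff_of_notMem _ hkS,
      Finset.card_insert_of_notMem (by simp), Finset.insert_sdiff_insert,
      Finset.sdiff_insert_of_notMem hnotMem, pow_succ, mul_neg_one, neg_mul, mul_sub]
    abel

end Expansion

theorem stmt13_general {ι : Type*} [LinearOrder ι] {A : Type*} [Ring A] (ω : ι → ι → A)
    (hrel : ∀ a b c : ι, a < b → b < c → ω a c * ω b c = ω a b * (ω b c - ω a c))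
    (p : ℕ) (j : ℕ → ι) (jt : ι)
    (hmono : ∀ s t : ℕ, s < t → t < p → j s < j t)
    (hjt : ∀ s : ℕ, s < p → j s < jt) :
    ((List.range p).map (fun s => ω (j s) jt)).prod =
      ∑ S ∈ (Finset.Ico 1 p).powerset,
        (-1 : A) ^ (((Finset.Ico 1 p).filter
            (fun s => modSeq j S s = modSeq j S (s - 1))).card) *
          ((List.range p).map
            (fun s => ω (modSeq j S s) (if s + 1 < p then j (s + 1) else jt))).prod := by
  rcases p with _ | p
  · simp
  rw [prod_eq_sum_prod_partialModFactor ω hrel hmono hjt p (Nat.lt_succ_self p)]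
  refine Finset.sum_congr rfl fun S _ => ?_
  rw [filter_modSeq_eq_sdiff j hmono S]
  refine congrArg _ (congrArg List.prod (List.map_congr_left fun s hs => ?_))
  rw [List.mem_range] at hs
  simp [partialModFactor, Nat.le_of_lt_succ hs]

/-- In a ring with elements `ω a b` (for `a < b`) satisfying `ω a b ^ 2 = 0` and
the three-term relation `ω a p * ω b p = ω a b * (ω b p - ω a p)` for `a < b < p`, for any
increasing sequence `j_0 < j_1 < ⋯ < j_{p-1} < jt` with `p ≥ 2` one has
`ω (j 0) jt ⋯ ω (j (p-1)) jt = Σ_I (-1)^{r(I)} ω (i_0) (j 1) ⋯ ω (i_{p-2}) (j (p-1)) ω (i_{p-1}) jt`,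
where `I` runs over the `2^{p-1}` `J`-modifications (indexed by subsets `S ⊆ {1,…,p-1}`)
and `r(I)` is the number of repetitions in `I`. -/
theorem stmt13 {ι : Type*} [LinearOrder ι] {A : Type*} [Ring A] (ω : ι → ι → A)
    (hsq : ∀ a b : ι, a < b → ω a b * ω a b = 0)
    (hrel : ∀ a b c : ι, a < b → b < c → ω a c * ω b c = ω a b * (ω b c - ω a c))
    (p : ℕ) (hp : 2 ≤ p) (j : ℕ → ι) (jt : ι)
    (hmono : ∀ s t : ℕ, s < t → t < p → j s < j t)
    (hjt : ∀ s : ℕ, s < p → j s < jt) :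
    ((List.range p).map (fun s => ω (j s) jt)).prod =
      ∑ S ∈ (Finset.Ico 1 p).powerset,
        (-1 : A) ^ (((Finset.Ico 1 p).filter
            (fun s => modSeq j S s = modSeq j S (s - 1))).card) *
          ((List.range p).map
            (fun s => ω (modSeq j S s) (if s + 1 < p then j (s + 1) else jt))).prod :=
  stmt13_general ω hrel p j jt hmono hjt
end
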